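/- arXiv:1705.06472 — 8 statements merged into one kernel-verified Lean document; each statement's English description precedes it below -/
import Mathlib

section
/- For the series with terms x_{2n-1} = (0, (-1)^n/n) and x_{2n} = ((-1)^n/n, 0) for n ∈ ℕ, the set of Levy vectors equals {(0,-1), (-1,0), (0,1), (1,0)}. -/
open Filter Topology

/-- Euclidean norm on the plane `ℝ × ℝ`. -/
noncomputable def enorm2 (v : ℝ × ℝ) : ℝ := Real.sqrt (v.1 ^ 2 + v.2 ^ 2)

/-- Euclidean inner product on the plane. -/
def dot2 (u v : ℝ × ℝ) : ℝ := u.1 * v.1 + u.2 * v.2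

/-- `u` is a Levy vector of the series `∑ x n`: `u` is a unit vector and for every `ε > 0`
the sum of norms of the terms lying in the cone `S_ε(u)` diverges. -/
noncomputable def IsLevy (x : ℕ → ℝ × ℝ) (u : ℝ × ℝ) : Prop :=
  enorm2 u = 1 ∧ ∀ ε : ℝ, 0 < ε → ¬ Summable (fun n =>
    if (1 - ε) * enorm2 u * enorm2 (x n) ≤ dot2 u (x n) then enorm2 (x n) else 0)

/-- The series `∑ x n` converges (in the given order) to `s`. -/
def ConvergesTo (x : ℕ → ℝ × ℝ) (s : ℝ × ℝ) : Prop :=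
  Tendsto (fun N => ∑ n ∈ Finset.range N, x n) atTop (𝓝 s)

/-- The series `∑ x n` is conditionally convergent. -/
noncomputable def CondConv (x : ℕ → ℝ × ℝ) : Prop :=
  (∃ s, ConvergesTo x s) ∧ ¬ Summable (fun n => enorm2 (x n))

/-- `s` belongs to the achievement set `A(x)`. -/
def Achieves (x : ℕ → ℝ × ℝ) (s : ℝ × ℝ) : Prop :=
  ∃ E : Set ℕ, ConvergesTo (Set.indicator E x) s

/-- `s` belongs to the absolute achievement set `A_abs(x)`. -/
noncomputable def AchievesAbs (x : ℕ → ℝ × ℝ) (s : ℝ × ℝ) : Prop :=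
  ∃ E : Set ℕ, Summable (fun n => enorm2 (Set.indicator E x n)) ∧
    HasSum (Set.indicator E x) s

/-- The reduction property of a series `∑ (x n, y n)`. -/
noncomputable def ReductionProperty (x y : ℕ → ℝ) : Prop :=
  Tendsto (fun n => |y n| / |x n|) atTop atTop ∧
  ∀ ε : ℝ, 0 < ε → ∀ t ∈ Set.Ioo (-ε) ε, ∀ N : ℕ,
    ∃ m : ℕ, ∃ k : ℕ → ℕ, 0 < m ∧ StrictMono k ∧ N ≤ k 0 ∧
      |(∑ i ∈ Finset.range m, x (k i)) - t| < ε / 2 ∧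
      ∀ j : ℕ, 1 ≤ j → j ≤ m →
        |∑ i ∈ Finset.range j, x (k i)| < ε ∧ |∑ i ∈ Finset.range j, y (k i)| < ε

/-!
Every term but `x 0` lies on a coordinate axis. For a unit vector `u` off the axes,
`⟨u, v⟩ ≤ max |u.1| |u.2| · ‖v‖` on the axes with `max |u.1| |u.2| < 1`, so a narrow cone around
`u` meets the axes only at the origin and `u` is not a Levy vector. Conversely, the terms
are `x (f n) = ((-1)^n / n) • e` with `(e, f n) = ((0, 1), 2n - 1)` or `((1, 0), 2n)`; those with
`n = 2k + p` equal `(2k + p)⁻¹ • (-1)^p • e`, so they lie on the ray through `(-1)^p • e` and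
their norms diverge like the harmonic series.
-/

lemma enorm2_smul (c : ℝ) (v : ℝ × ℝ) : enorm2 (c • v) = |c| * enorm2 v := by
  rw [enorm2, enorm2, ← Real.sqrt_sq_eq_abs, ← Real.sqrt_mul (sq_nonneg c)]
  congr 1
  simp only [Prod.smul_fst, Prod.smul_snd, smul_eq_mul]
  ring

lemma dot2_self (v : ℝ × ℝ) : dot2 v v = enorm2 v ^ 2 := by
  rw [enorm2, Real.sq_sqrt (by positivity), dot2]
  ring

lemma dot2_le_of_fst_eq_zero_or_snd_eq_zero (u : ℝ × ℝ) {v : ℝ × ℝ} (hv : v.1 = 0 ∨ v.2 = 0) :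
    dot2 u v ≤ max |u.1| |u.2| * enorm2 v := by
  obtain ⟨a, b⟩ := v
  rcases hv with rfl | rfl
  · have : u.2 * b ≤ |u.2| * |b| := (le_abs_self _).trans (abs_mul _ _).le
    simpa [dot2, enorm2, Real.sqrt_sq_eq_abs] using
      this.trans (mul_le_mul_of_nonneg_right (le_max_right _ _) (abs_nonneg b))
  · have : u.1 * a ≤ |u.1| * |a| := (le_abs_self _).trans (abs_mul _ _).le
    simpa [dot2, enorm2, Real.sqrt_sq_eq_abs] using
      this.trans (mul_le_mul_of_nonneg_right (le_max_left _ _) (abs_nonneg a))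

lemma eq_of_enorm2_eq_one_of_fst_eq_zero_or_snd_eq_zero {u : ℝ × ℝ} (hu : enorm2 u = 1)
    (h : u.1 = 0 ∨ u.2 = 0) : u = (0, -1) ∨ u = (-1, 0) ∨ u = (0, 1) ∨ u = (1, 0) := by
  obtain ⟨a, b⟩ := u
  have hsq : a ^ 2 + b ^ 2 = 1 := Real.sqrt_eq_one.mp hu
  rcases h with rfl | rfl
  · rcases (by simpa using hsq : b = 1 ∨ b = -1) with rfl | rfl <;> simp
  · rcases (by simpa using hsq : a = 1 ∨ a = -1) with rfl | rfl <;> simp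

lemma max_abs_lt_one_of_enorm2_eq_one {u : ℝ × ℝ} (hu : enorm2 u = 1) (h1 : u.1 ≠ 0)
    (h2 : u.2 ≠ 0) : max |u.1| |u.2| < 1 := by
  have hsq : u.1 ^ 2 + u.2 ^ 2 = 1 := Real.sqrt_eq_one.mp hu
  have hpos1 : 0 < u.1 ^ 2 := by positivity
  have hpos2 : 0 < u.2 ^ 2 := by positivity
  exact max_lt ((sq_lt_one_iff_abs_lt_one _).mp (by linarith))
    ((sq_lt_one_iff_abs_lt_one _).mp (by linarith))

lemma not_isLevy_of_fst_ne_zero_of_snd_ne_zero {x : ℕ → ℝ × ℝ} {u : ℝ × ℝ} (h1 : u.1 ≠ 0)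
    (h2 : u.2 ≠ 0) (s : Finset ℕ) (hx : ∀ n ∉ s, (x n).1 = 0 ∨ (x n).2 = 0) :
    ¬ IsLevy x u := by
  rintro ⟨hu, hdiv⟩
  set M := max |u.1| |u.2|
  have hM : M < 1 := max_abs_lt_one_of_enorm2_eq_one hu h1 h2
  refine hdiv ((1 - M) / 2) (by linarith) (summable_of_ne_finset_zero (s := s) fun n hn => ?_)
  split_ifs with hcone
  · have hdot := dot2_le_of_fst_eq_zero_or_snd_eq_zero u (hx n hn)
    have hnorm : 0 ≤ enorm2 (x n) := Real.sqrt_nonneg _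
    rw [hu] at hcone
    nlinarith
  · rfl

lemma not_summable_one_div_two_mul_add (p : ℕ) :
    ¬ Summable (fun k : ℕ => 1 / (2 * k + p : ℝ)) := by
  intro h
  refine absurd ((h.mul_left 2).congr fun k => ?_)
    (mt (Real.summable_one_div_nat_add_rpow (p / 2) 1).mp (lt_irrefl 1))
  rw [Real.rpow_one, abs_of_nonneg (by positivity)]
  field_simp

lemma isLevy_of_smul (x : ℕ → ℝ × ℝ) {u : ℝ × ℝ} (hu : enorm2 u = 1) {g : ℕ → ℕ}
    (hg : Function.Injective g) {c : ℕ → ℝ} (hc₀ : ∀ k, 0 ≤ c k) (hc : ¬ Summable c)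
    (hx : ∀ k, x (g k) = c k • u) : IsLevy x u := by
  refine ⟨hu, fun ε hε hs => hc <| (hs.comp_injective hg).congr fun k => ?_⟩
  have hnorm : enorm2 (c k • u) = c k := by rw [enorm2_smul, hu, abs_of_nonneg (hc₀ k), mul_one]
  have hdot : dot2 u (c k • u) = c k := by
    have : dot2 u (c k • u) = c k * dot2 u u := by
      simp only [dot2, Prod.smul_fst, Prod.smul_snd, smul_eq_mul]
      ring
    rw [this, dot2_self, hu, one_pow, mul_one]
  simp only [Function.comp_apply, hx, hnorm, hdot, hu]
  exact if_pos (by nlinarith [hc₀ k])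

lemma isLevy_neg_one_pow_smul (x : ℕ → ℝ × ℝ) {e : ℝ × ℝ} (he : enorm2 e = 1) {f : ℕ → ℕ}
    (hf : Function.Injective f) (hx : ∀ n, 1 ≤ n → x (f n) = ((-1 : ℝ) ^ n / n) • e)
    {p : ℕ} (hp : 1 ≤ p) : IsLevy x ((-1 : ℝ) ^ p • e) := by
  refine isLevy_of_smul x (by simp [enorm2_smul, he]) (g := fun k => f (2 * k + p))
    (hf.comp fun a b h => by omega) (fun k => by positivity) (not_summable_one_div_two_mul_add p)
    fun k => ?_
  rw [hx _ (by omega), smul_smul, pow_add, pow_mul, neg_one_sq, one_pow, one_mul]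
  push_cast
  ring_nf

theorem stmt_4 (x : ℕ → ℝ × ℝ)
    (h1 : ∀ n : ℕ, 1 ≤ n → x (2 * n - 1) = (0, (-1 : ℝ) ^ n / n))
    (h2 : ∀ n : ℕ, 1 ≤ n → x (2 * n) = ((-1 : ℝ) ^ n / n, 0)) :
    {u : ℝ × ℝ | IsLevy x u} =
      {((0 : ℝ), (-1 : ℝ)), ((-1 : ℝ), (0 : ℝ)), ((0 : ℝ), (1 : ℝ)), ((1 : ℝ), (0 : ℝ))} := by
  have hodd (n : ℕ) (hn : 1 ≤ n) : x (2 * n - 1) = ((-1 : ℝ) ^ n / n) • (0, 1) := by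
    simp [h1 n hn]
  have heven (n : ℕ) (hn : 1 ≤ n) : x (2 * n) = ((-1 : ℝ) ^ n / n) • (1, 0) := by
    simp [h2 n hn]
  have hodd_inj : Function.Injective fun n => 2 * n - 1 := fun a b h => by simp only at h; omega
  have heven_inj : Function.Injective fun n => 2 * n := fun a b h => by simp only at h; omega
  ext u
  simp only [Set.mem_ofPred_eq, Set.mem_insert_iff, Set.mem_singleton_iff]
  constructor
  · intro hu
    by_contra hne
    have hu₀ : u.1 ≠ 0 ∧ u.2 ≠ 0 :=
      not_or.mp (mt (eq_of_enorm2_eq_one_of_fst_eq_zero_or_snd_eq_zero hu.1) hne)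
    have hx_axes : ∀ n ∉ ({0} : Finset ℕ), (x n).1 = 0 ∨ (x n).2 = 0 := by
      intro n hn
      obtain ⟨m, rfl | rfl⟩ := Nat.even_or_odd' n
      · simp [h2 m (by simp at hn; omega)]
      · simp [show 2 * m + 1 = 2 * (m + 1) - 1 by omega, h1 (m + 1) le_add_self]
    exact not_isLevy_of_fst_ne_zero_of_snd_ne_zero hu₀.1 hu₀.2 {0} hx_axes hu
  · have hunit : enorm2 ((0 : ℝ), (1 : ℝ)) = 1 ∧ enorm2 ((1 : ℝ), (0 : ℝ)) = 1 := by
      simp [enorm2]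
    rintro (rfl | rfl | rfl | rfl)
    · simpa using isLevy_neg_one_pow_smul x hunit.1 hodd_inj hodd (p := 1) le_rfl
    · simpa using isLevy_neg_one_pow_smul x hunit.2 heven_inj heven (p := 1) le_rfl
    · simpa using isLevy_neg_one_pow_smul x hunit.1 hodd_inj hodd (p := 2) one_le_two
    · simpa using isLevy_neg_one_pow_smul x hunit.2 heven_inj heven (p := 2) one_le_two
end

section
/- The set of Levy vectors of the series ∑_{n≥1} ((-1)^n/n, (-1)^n/√n) is exactly {(0,1), (0,-1)}. -/
open Filter Topology

lemma enx (n : ℕ) (hn : 1 ≤ n) :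
    enorm2 ((-1:ℝ)^n/(n:ℝ), (-1:ℝ)^n/Real.sqrt n) = Real.sqrt (1/(n:ℝ)^2 + 1/(n:ℝ)) := by
  have hn0 : (0:ℝ) < n := by exact_mod_cast hn
  unfold enorm2
  congr 1
  have h1 : ((-1:ℝ)^n)^2 = 1 := by rw [← pow_mul, mul_comm, pow_mul]; norm_num
  rw [div_pow, div_pow, h1, Real.sq_sqrt hn0.le]

lemma not_summable_inv_sqrt' : ¬ Summable (fun n : ℕ => 1 / Real.sqrt n) := by
  intro hs
  have h1 : Summable (fun n : ℕ => 1 / (n:ℝ) ^ ((1:ℝ)/2)) := by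
    simpa [Real.sqrt_eq_rpow] using hs
  have := (Real.summable_one_div_nat_rpow).mp h1
  norm_num at this

lemma aux_not_summable' (g : ℕ → ℝ) (hg : ∀ n, 0 ≤ g n) (f : ℕ → ℕ)
    (hf : Function.Injective f) (C : ℕ) (hC : 0 < C) (hfC : ∀ k, f k ≤ C * (k + 1))
    (hfpos : ∀ k, 0 < f k)
    (hlb : ∀ k, 1 / Real.sqrt (f k) ≤ g (f k)) : ¬ Summable g := by
  intro hs
  have h1 : Summable (fun k => g (f k)) := hs.comp_injective hf
  have h2 : Summable (fun k => 1 / Real.sqrt (f k)) :=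
    Summable.of_nonneg_of_le (fun k => by positivity) hlb h1
  have h3 : Summable (fun k : ℕ => 1 / Real.sqrt (C * (k + 1))) := by
    refine Summable.of_nonneg_of_le (fun k => by positivity) (fun k => ?_) h2
    have h0 : (0:ℝ) < Real.sqrt (f k) := Real.sqrt_pos.mpr (by exact_mod_cast hfpos k)
    apply one_div_le_one_div_of_le h0
    apply Real.sqrt_le_sqrt
    exact_mod_cast hfC k
  have h4 : Summable (fun k : ℕ => (1 / Real.sqrt C) * (1 / Real.sqrt (k + 1))) := by
    refine h3.congr fun k => ?_
    rw [Real.sqrt_mul (by positivity)]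
    ring
  have h5 : Summable (fun k : ℕ => 1 / Real.sqrt (k + 1)) := by
    have hCne : (1 / Real.sqrt C : ℝ) ≠ 0 := by
      have : (0:ℝ) < Real.sqrt C := Real.sqrt_pos.mpr (by exact_mod_cast hC)
      positivity
    exact (summable_mul_left_iff hCne).mp h4
  have h6 : Summable (fun n : ℕ => 1 / Real.sqrt n) := by
    rw [← summable_nat_add_iff 1]
    exact h5.congr fun k => by push_cast; ring_nf
  exact not_summable_inv_sqrt' h6

lemma sqrt_one_div' (n : ℕ) : Real.sqrt (1/(n:ℝ)) = 1 / Real.sqrt n := by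
  rw [one_div, one_div, Real.sqrt_inv]

lemma enx_lb' (n : ℕ) :
    1 / Real.sqrt n ≤ Real.sqrt (1/(n:ℝ)^2 + 1/(n:ℝ)) := by
  rw [← sqrt_one_div']
  exact Real.sqrt_le_sqrt (le_add_of_nonneg_left (by positivity))

lemma cond_lemma' (n : ℕ) (hn : 1 ≤ n) (c : ℝ) (hc : 0 ≤ c)
    (hcn : c^2 * (1 + 1/(n:ℝ)) ≤ 1) :
    c * Real.sqrt (1/(n:ℝ)^2 + 1/(n:ℝ)) ≤ 1 / Real.sqrt n := by
  have hn0 : (0:ℝ) < n := by exact_mod_cast hn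
  have h1 : c * Real.sqrt (1/(n:ℝ)^2 + 1/(n:ℝ)) = Real.sqrt (c^2 * (1/(n:ℝ)^2 + 1/(n:ℝ))) := by
    rw [Real.sqrt_mul (sq_nonneg c), Real.sqrt_sq hc]
  rw [h1, ← sqrt_one_div']
  apply Real.sqrt_le_sqrt
  have e : c^2 * (1/(n:ℝ)^2 + 1/(n:ℝ)) = (c^2 * (1 + 1/(n:ℝ))) * (1/(n:ℝ)) := by
    field_simp; ring
  rw [e]
  calc (c^2 * (1 + 1/(n:ℝ))) * (1/(n:ℝ)) ≤ 1 * (1/(n:ℝ)) :=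
        mul_le_mul_of_nonneg_right hcn (by positivity)
    _ = 1/(n:ℝ) := one_mul _

lemma levy_div (x : ℕ → ℝ × ℝ) (u : ℝ × ℝ) (hu1 : enorm2 u = 1) (p : ℕ) (hp : p ≤ 1)
    (hnx : ∀ n : ℕ, 1 ≤ n → enorm2 (x n) = Real.sqrt (1/(n:ℝ)^2 + 1/(n:ℝ)))
    (hdot : ∀ n : ℕ, 1 ≤ n → n % 2 = p → dot2 u (x n) = 1 / Real.sqrt n) :
    ∀ ε : ℝ, 0 < ε → ¬ Summable (fun n =>
      if (1 - ε) * enorm2 u * enorm2 (x n) ≤ dot2 u (x n) then enorm2 (x n) else 0) := by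
  intro ε hε hs
  set ε₀ := min ε (1/2) with hε₀def
  have hε₀pos : 0 < ε₀ := lt_min hε (by norm_num)
  have hε₀le : ε₀ ≤ 1/2 := min_le_right _ _
  have hε₀ε : ε₀ ≤ ε := min_le_left _ _
  set g := fun n => if (1 - ε₀) * enorm2 u * enorm2 (x n) ≤ dot2 u (x n)
      then enorm2 (x n) else 0 with hgdef
  have hgnn : ∀ n, 0 ≤ g n := by
    intro n
    simp only [hgdef]
    split
    · exact Real.sqrt_nonneg _
    · exact le_refl 0
  have hg : Summable g := by
    refine Summable.of_nonneg_of_le hgnn (fun n => ?_) hs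
    simp only [hgdef]
    by_cases hcond : (1 - ε₀) * enorm2 u * enorm2 (x n) ≤ dot2 u (x n)
    · rw [if_pos hcond, if_pos ?_]
      refine le_trans ?_ hcond
      have h1 : 0 ≤ enorm2 u * enorm2 (x n) :=
        mul_nonneg (Real.sqrt_nonneg _) (Real.sqrt_nonneg _)
      rw [mul_assoc, mul_assoc]
      exact mul_le_mul_of_nonneg_right (by linarith) h1
    · rw [if_neg hcond]
      split
      · exact Real.sqrt_nonneg _
      · exact le_refl 0
  set c := 1 - ε₀ with hcdef
  have hc0 : 0 ≤ c := by simp only [hcdef]; linarith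
  have hclt : c < 1 := by simp only [hcdef]; linarith
  have hδ : 0 < 1 - c^2 := by nlinarith
  obtain ⟨M0, hM0⟩ := exists_nat_gt (c^2 / (1 - c^2))
  set M := M0 + 1 with hMdef
  refine aux_not_summable' g hgnn (fun k => 2*(k+M)+p) ?_ (2*M+2) (by omega) ?_ ?_ ?_ hg
  · intro a b hab; simp only [] at hab; omega
  · intro k; nlinarith
  · intro k; show 0 < 2*(k+M)+p; omega
  · intro k
    set n := 2*(k+M)+p with hndef
    have hn1 : 1 ≤ n := by omega
    have hpar : n % 2 = p := by omega
    have hMn : M ≤ n := by omega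
    have hn0 : (0:ℝ) < n := by exact_mod_cast hn1
    have hcn : c^2 * (1 + 1/(n:ℝ)) ≤ 1 := by
      have hMn' : c^2 / (1 - c^2) < (n:ℝ) := by
        refine lt_of_lt_of_le hM0 ?_
        exact_mod_cast (by omega : M0 ≤ n)
      have h2 : c^2 / (n:ℝ) < 1 - c^2 := by
        rw [div_lt_iff₀ hn0]
        rw [div_lt_iff₀ hδ] at hMn'
        linarith [hMn']
      have e : c^2 * (1 + 1/(n:ℝ)) = c^2 + c^2/(n:ℝ) := by ring
      rw [e]; linarith
    have hcond : (1 - ε₀) * enorm2 u * enorm2 (x n) ≤ dot2 u (x n) := by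
      rw [hu1, mul_one, hnx n hn1, hdot n hn1 hpar]
      exact cond_lemma' n hn1 c hc0 hcn
    have : g n = enorm2 (x n) := by simp only [hgdef]; rw [if_pos hcond]
    rw [this, hnx n hn1]
    exact enx_lb' n

theorem stmt_5 (x : ℕ → ℝ × ℝ)
    (h : ∀ n : ℕ, 1 ≤ n → x n = ((-1 : ℝ) ^ n / n, (-1 : ℝ) ^ n / Real.sqrt n)) :
    {u : ℝ × ℝ | IsLevy x u} = {((0 : ℝ), (1 : ℝ)), ((0 : ℝ), (-1 : ℝ))} := by
  ext u
  simp only [Set.mem_setOf_eq, Set.mem_insert_iff, Set.mem_singleton_iff]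
  constructor
  · rintro ⟨hnorm, hdiv⟩
    by_contra hne
    push_neg at hne
    obtain ⟨h1u, h2u⟩ := hne
    have habs : u.1^2 + u.2^2 = 1 := by
      have h2 := Real.sq_sqrt (show (0:ℝ) ≤ u.1^2+u.2^2 by positivity)
      unfold enorm2 at hnorm
      rw [hnorm] at h2
      nlinarith [h2]
    have ha : u.1 ≠ 0 := by
      intro h0
      have hb2 : u.2 * u.2 = 1 := by nlinarith
      rcases mul_self_eq_one_iff.mp hb2 with hb | hb
      · exact h1u (Prod.ext h0 hb)
      · exact h2u (Prod.ext h0 hb)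
    set a := |u.1| with hadef
    set b := |u.2| with hbdef
    have hbnn : 0 ≤ b := abs_nonneg _
    have hann : 0 < a := abs_pos.mpr ha
    have hbl : b < 1 := by nlinarith [sq_abs u.1, sq_abs u.2]
    set ε := (1 - b)/2 with hεdef
    have hεpos : 0 < ε := by simp only [hεdef]; linarith
    refine hdiv ε hεpos ?_
    obtain ⟨N0, hN0⟩ := exists_nat_gt ((a/ε)^2)
    apply summable_of_ne_finset_zero (s := Finset.range (N0+1))
    intro n hn
    rw [Finset.mem_range, not_lt] at hn
    have hn1 : 1 ≤ n := by omega
    have hn0 : (0:ℝ) < n := by exact_mod_cast hn1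
    have hcond : ¬ ((1-ε) * enorm2 u * enorm2 (x n) ≤ dot2 u (x n)) := by
      rw [not_le, hnorm, mul_one, h n hn1]
      set s := Real.sqrt n with hsdef
      have hs : 0 < s := Real.sqrt_pos.mpr hn0
      have hss : s * s = (n:ℝ) := Real.mul_self_sqrt hn0.le
      have hsgt : a/ε < s := by
        have h3 : ((a/ε)^2) < (n:ℝ) := lt_of_lt_of_le hN0 (by exact_mod_cast (by omega : N0 ≤ n))
        have h4 : a/ε = Real.sqrt ((a/ε)^2) := (Real.sqrt_sq (by positivity)).symm
        rw [h4, hsdef]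
        exact Real.sqrt_lt_sqrt (by positivity) h3
      have hneg1 : |(-1:ℝ)^n| = 1 := by rw [abs_pow, abs_neg, abs_one, one_pow]
      have hdotle : dot2 u ((-1:ℝ)^n/(n:ℝ), (-1:ℝ)^n/Real.sqrt n) ≤ a/(n:ℝ) + b/s := by
        unfold dot2
        dsimp only
        have hab1 : u.1 * ((-1:ℝ)^n/(n:ℝ)) ≤ a/(n:ℝ) := by
          refine le_trans (le_abs_self _) (le_of_eq ?_)
          rw [abs_mul, abs_div, hneg1, Nat.abs_cast, hadef]
          ring
        have hab2 : u.2 * ((-1:ℝ)^n/Real.sqrt n) ≤ b/s := by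
          refine le_trans (le_abs_self _) (le_of_eq ?_)
          rw [abs_mul, abs_div, hneg1, hbdef, abs_of_pos hs]
          ring
        linarith
      have hlb : 1/s ≤ enorm2 ((-1:ℝ)^n/(n:ℝ), (-1:ℝ)^n/Real.sqrt n) := by
        rw [enx n hn1]
        exact enx_lb' n
      have hkey : a/(n:ℝ) + b/s < (1-ε)*(1/s) := by
        have h5 : a < ε * s := by
          rw [div_lt_iff₀ hεpos] at hsgt
          linarith [hsgt]
        have e1 : a/(n:ℝ) < ε/s := by
          rw [div_lt_div_iff₀ hn0 hs]
          nlinarith [mul_lt_mul_of_pos_right h5 hs]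
        have e2 : (1-ε)*(1/s) = ε/s + b/s := by
          simp only [hεdef]
          field_simp
          ring
        rw [e2]; linarith
      refine lt_of_le_of_lt hdotle (lt_of_lt_of_le hkey ?_)
      exact mul_le_mul_of_nonneg_left hlb (by simp only [hεdef]; linarith)
    exact if_neg hcond
  · rintro (rfl | rfl)
    · have he : enorm2 ((0:ℝ), (1:ℝ)) = 1 := by
        unfold enorm2; norm_num
      refine ⟨he, ?_⟩
      refine levy_div x _ he 0 (by norm_num) ?_ ?_
      · intro n hn; rw [h n hn]; exact enx n hn
      · intro n hn hpar
        rw [h n hn]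
        unfold dot2
        dsimp only
        have : (-1:ℝ)^n = 1 := Even.neg_one_pow (Nat.even_iff.mpr hpar)
        rw [this]; ring
    · have he : enorm2 ((0:ℝ), (-1:ℝ)) = 1 := by
        unfold enorm2; norm_num
      refine ⟨he, ?_⟩
      refine levy_div x _ he 1 (by norm_num) ?_ ?_
      · intro n hn; rw [h n hn]; exact enx n hn
      · intro n hn hpar
        rw [h n hn]
        unfold dot2
        dsimp only
        have : (-1:ℝ)^n = -1 := Odd.neg_one_pow (Nat.odd_iff.mpr hpar)
        rw [this]; ring
end

section
/- Let ∑ x_n be a conditionally convergent series in ℝ² with two non-collinear Levy vectors u and v. Then for every x ∈ span⁺(u,v) = {au + bv : a,b > 0} there exists a set E ⊆ ℕ of indices such that ∑_{n∈E} ‖x_n‖ < ∞ and ∑_{n∈E} x_n = x. That is, span⁺(u,v) ⊆ A_abs(x_n). -/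
open Filter Topology

/-!
Since the series converges, its terms tend to zero. If `u` is a Levy vector, the terms lying in a
narrow cone around `u` have divergent norm sum, and a finite block of such terms, all of small
norm, adds up to almost `(∑ ‖x n‖) • u`; so every `δ • u` with `δ > 0` is approximated by a block
of terms arbitrarily far out whose norms sum to at most `δ`. Concatenating a `u`-block and a
`v`-block approximates every point of the open cone `span⁺(u, v)` at a cost linear in its norm.
Now subtract, block after block, an approximation of half of the current remainder: the
remainder stays in the open cone and shrinks geometrically, so the union of the blocks is an
index set with summable norms whose sum is the target.
-/

open scoped RealInnerProductSpace

section TailApproximable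

variable {E : Type*} [SeminormedAddCommGroup E]

def TailApproximable (x : ℕ → E) (c : ℝ) (w : E) : Prop :=
  ∀ η > 0, ∀ N : ℕ, ∃ G : Finset ℕ, (∀ n ∈ G, N ≤ n) ∧
    ∑ n ∈ G, ‖x n‖ ≤ c ∧ ‖∑ n ∈ G, x n - w‖ ≤ η

variable {x : ℕ → E} {c c' : ℝ} {w w' : E}

lemma TailApproximable.mono (h : TailApproximable x c w) (hc : c ≤ c') :
    TailApproximable x c' w := by
  intro η hη N
  obtain ⟨G, hGN, hGc, hGw⟩ := h η hη N
  exact ⟨G, hGN, hGc.trans hc, hGw⟩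

lemma tailApproximable_zero : TailApproximable x 0 0 :=
  fun _ hη _ => ⟨∅, by simp, by simp, by simpa using hη.le⟩

lemma TailApproximable.add (h : TailApproximable x c w) (h' : TailApproximable x c' w') :
    TailApproximable x (c + c') (w + w') := by
  intro η hη N
  obtain ⟨G, hGN, hGc, hGw⟩ := h (η / 2) (half_pos hη) N
  obtain ⟨M, hGM⟩ := G.exists_nat_subset_range
  obtain ⟨G', hG'N, hG'c, hG'w⟩ := h' (η / 2) (half_pos hη) (max N M)
  have hdisj : Disjoint G G' := Finset.disjoint_left.mpr fun n hn hn' =>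
    (Finset.mem_range.mp (hGM hn)).not_ge ((le_max_right N M).trans (hG'N n hn'))
  refine ⟨G ∪ G', ?_, ?_, ?_⟩
  · intro n hn
    rcases Finset.mem_union.mp hn with hn | hn
    · exact hGN n hn
    · exact (le_max_left N M).trans (hG'N n hn)
  · rw [Finset.sum_union hdisj]
    exact add_le_add hGc hG'c
  · rw [Finset.sum_union hdisj, add_sub_add_comm]
    calc _ ≤ ‖∑ n ∈ G, x n - w‖ + ‖∑ n ∈ G', x n - w'‖ := norm_add_le _ _
      _ ≤ η := by linarith

lemma TailApproximable.sum {ι : Type*} (s : Finset ι) {c : ι → ℝ} {w : ι → E}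
    (h : ∀ i ∈ s, TailApproximable x (c i) (w i)) :
    TailApproximable x (∑ i ∈ s, c i) (∑ i ∈ s, w i) := by
  classical
  induction s using Finset.induction_on with
  | empty => simpa using tailApproximable_zero
  | insert i s hi ih =>
    rw [Finset.sum_insert hi, Finset.sum_insert hi]
    exact (h i (Finset.mem_insert_self i s)).add
      (ih fun j hj => h j (Finset.mem_insert_of_mem hj))

end TailApproximable

lemma exists_sum_range_mem_Ioc {f : ℕ → ℝ} {h δ : ℝ} (hf : ∀ n, 0 ≤ f n) (hfh : ∀ n, f n ≤ h)
    (hns : ¬ Summable f) (hδ : 0 ≤ δ) :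
    ∃ M, ∑ n ∈ Finset.range M, f n ∈ Set.Ioc (δ - h) δ := by
  classical
  have hex : ∃ M, δ < ∑ n ∈ Finset.range M, f n :=
    (((not_summable_iff_tendsto_nat_atTop_of_nonneg hf).mp hns).eventually_gt_atTop δ).exists
  have hfind_ne : Nat.find hex ≠ 0 := by
    intro h0
    have := Nat.find_spec hex
    rw [h0, Finset.sum_range_zero] at this
    linarith
  obtain ⟨M, hM⟩ := Nat.exists_eq_succ_of_ne_zero hfind_ne
  have hbelow : ¬ δ < ∑ n ∈ Finset.range M, f n := Nat.find_min hex (by omega)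
  have habove := Nat.find_spec hex
  rw [hM, Finset.sum_range_succ] at habove
  exact ⟨M, by linarith [hfh M], not_lt.mp hbelow⟩

lemma tendsto_zero_of_tendsto_sum_range {G : Type*} [AddCommGroup G] [TopologicalSpace G]
    [IsTopologicalAddGroup G] {x : ℕ → G} {s : G}
    (h : Tendsto (fun N => ∑ n ∈ Finset.range N, x n) atTop (𝓝 s)) :
    Tendsto x atTop (𝓝 0) := by
  simpa [Finset.sum_range_succ] using (h.comp (tendsto_add_atTop_nat 1)).sub h

section Cone

variable {E : Type*} [NormedAddCommGroup E] [InnerProductSpace ℝ E]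

-- The divergence half of `IsLevy`, in an arbitrary real inner product space.
def ConeDivergent (x : ℕ → E) (u : E) : Prop :=
  ∀ ε > 0, ¬ Summable fun n => if (1 - ε) * ‖u‖ * ‖x n‖ ≤ ⟪u, x n⟫ then ‖x n‖ else 0

lemma norm_sub_norm_smul_le_of_cone {u y : E} {θ : ℝ} (hθ : 0 ≤ θ) (hu : ‖u‖ = 1)
    (hy : (1 - θ ^ 2 / 2) * ‖y‖ ≤ ⟪u, y⟫) : ‖y - ‖y‖ • u‖ ≤ θ * ‖y‖ := by
  have hsq : ‖y - ‖y‖ • u‖ ^ 2 ≤ (θ * ‖y‖) ^ 2 := by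
    rw [norm_sub_sq_real, inner_smul_right, norm_smul, real_inner_comm, hu,
      Real.norm_of_nonneg (norm_nonneg y)]
    nlinarith [norm_nonneg y]
  exact (pow_le_pow_iff_left₀ (norm_nonneg _) (by positivity) two_ne_zero).mp hsq

lemma norm_sum_sub_smul_le_of_cone {u : E} {θ : ℝ} (hθ : 0 ≤ θ) (hu : ‖u‖ = 1)
    {x : ℕ → E} {G : Finset ℕ} (hG : ∀ n ∈ G, (1 - θ ^ 2 / 2) * ‖x n‖ ≤ ⟪u, x n⟫) :
    ‖∑ n ∈ G, x n - (∑ n ∈ G, ‖x n‖) • u‖ ≤ θ * ∑ n ∈ G, ‖x n‖ := by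
  rw [Finset.sum_smul, ← Finset.sum_sub_distrib, Finset.mul_sum]
  exact (norm_sum_le _ _).trans
    (Finset.sum_le_sum fun n hn => norm_sub_norm_smul_le_of_cone hθ hu (hG n hn))

lemma ConeDivergent.tailApproximable {x : ℕ → E} {u : E} (hdiv : ConeDivergent x u)
    (hu : ‖u‖ = 1) (hx : Tendsto x atTop (𝓝 0)) {δ : ℝ} (hδ : 0 < δ) :
    TailApproximable x δ (δ • u) := by
  classical
  intro η hη N
  set θ := η / (2 * δ)
  have hθ : 0 ≤ θ := by positivity
  have hθδ : θ * δ = η / 2 := by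
    change η / (2 * δ) * δ = η / 2
    field_simp
  obtain ⟨N₁, hN₁⟩ := eventually_atTop.mp
    ((NormedAddGroup.tendsto_nhds_zero.mp hx) (η / 2) (half_pos hη))
  set N₀ := max N N₁
  let cone : ℕ → Prop := fun n => (1 - θ ^ 2 / 2) * ‖u‖ * ‖x n‖ ≤ ⟪u, x n⟫
  let f : ℕ → ℝ := fun n => if N₀ ≤ n ∧ cone n then ‖x n‖ else 0
  have hns : ¬ Summable f := fun hf => hdiv (θ ^ 2 / 2) (by positivity) <|
    (summable_nat_add_iff N₀).mp <| ((summable_nat_add_iff N₀).mpr hf).congr fun n => by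
      simp [f, cone]
  have hfh : ∀ n, f n ≤ η / 2 := fun n => by
    by_cases hn : N₀ ≤ n ∧ cone n
    · simpa [f, hn] using (hN₁ n (le_trans (le_max_right _ _) hn.1)).le
    · simpa [f, hn] using (half_pos hη).le
  obtain ⟨M, hMlo, hMhi⟩ := exists_sum_range_mem_Ioc (fun n => by positivity) hfh hns hδ.le
  let G := (Finset.range M).filter fun n => N₀ ≤ n ∧ cone n
  set t := ∑ n ∈ G, ‖x n‖
  have ht : t = ∑ n ∈ Finset.range M, f n := Finset.sum_filter _ _
  have hcone : ‖∑ n ∈ G, x n - t • u‖ ≤ θ * t := norm_sum_sub_smul_le_of_cone hθ hu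
    fun n hn => by simpa [cone, hu] using (Finset.mem_filter.mp hn).2.2
  refine ⟨G, fun n hn => le_trans (le_max_left _ _) (Finset.mem_filter.mp hn).2.1,
    ht.trans_le hMhi, ?_⟩
  calc ‖∑ n ∈ G, x n - δ • u‖ = ‖(∑ n ∈ G, x n - t • u) + (t - δ) • u‖ := by
        rw [sub_smul]; abel_nf
    _ ≤ θ * t + (δ - t) := by
        refine (norm_add_le _ _).trans (add_le_add hcone ?_)
        rw [norm_smul, hu, mul_one, Real.norm_eq_abs, abs_sub_comm, abs_of_nonneg (by linarith)]
    _ ≤ η := by nlinarith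

end Cone

lemma summable_norm_indicator_and_hasSum_of_monotone {α E : Type*} [NormedAddCommGroup E]
    [CompleteSpace E] {f : α → E} {g : ℕ → Finset α} (hg : Monotone g) {B : ℝ}
    (hB : ∀ k, ∑ n ∈ g k, ‖f n‖ ≤ B) {w : E}
    (hlim : Tendsto (fun k => ∑ n ∈ g k, f n) atTop (𝓝 w)) :
    Summable (fun n => ‖(⋃ k, (g k : Set α)).indicator f n‖) ∧
      HasSum ((⋃ k, (g k : Set α)).indicator f) w := by
  classical
  set S := ⋃ k, (g k : Set α)
  let h : ℕ → Finset S := fun k => (g k).subtype (· ∈ S)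
  have hh : Tendsto h atTop atTop := tendsto_atTop_finset_of_monotone
    (fun k l hkl => Finset.subtype_mono (hg hkl)) fun i => by
      obtain ⟨k, hk⟩ := Set.mem_iUnion.mp i.2
      exact ⟨k, Finset.mem_subtype.mpr hk⟩
  have hmem : ∀ k, ∀ n ∈ g k, n ∈ S := fun k n hn => Set.mem_iUnion.mpr ⟨k, hn⟩
  have hnorm : Summable fun i : S => ‖f i‖ :=
    summable_of_sum_le (fun _ => norm_nonneg _) fun H => by
      obtain ⟨k, hk⟩ := (hh.eventually (eventually_ge_atTop H)).exists
      calc ∑ i ∈ H, ‖f i‖ ≤ ∑ i ∈ h k, ‖f i‖ :=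
            Finset.sum_le_sum_of_subset_of_nonneg hk fun _ _ _ => norm_nonneg _
        _ ≤ B := (Finset.sum_subtype_of_mem _ (hmem k)).trans_le (hB k)
  have hS : HasSum (fun i : S => f i) w := by
    have htsum : Tendsto (fun k => ∑ n ∈ g k, f n) atTop (𝓝 (∑' i : S, f i)) := by
      simpa [Function.comp_def, h, Finset.sum_subtype_of_mem _ (hmem _)] using
        hnorm.of_norm.hasSum.comp hh
    simpa [tendsto_nhds_unique htsum hlim] using hnorm.of_norm.hasSum
  refine ⟨?_, hasSum_subtype_iff_indicator.mp hS⟩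
  simp_rw [norm_indicator_eq_indicator_norm]
  exact summable_subtype_iff_indicator.mp hnorm

section Exhaustion

variable {E : Type*} [NormedAddCommGroup E] [NormedSpace ℝ E] {x : ℕ → E} {C : Set E} {K : ℝ}

lemma exists_finset_sub_mem_of_tailApproximable (hC : IsOpen C)
    (hhalf : ∀ w ∈ C, (2⁻¹ : ℝ) • w ∈ C) (happrox : ∀ w ∈ C, TailApproximable x (K * ‖w‖) w)
    {R : E} (hR : R ∈ C) (N : ℕ) :
    ∃ G : Finset ℕ, (∀ n ∈ G, N ≤ n) ∧ ∑ n ∈ G, ‖x n‖ ≤ K * ‖R‖ / 2 ∧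
      R - ∑ n ∈ G, x n ∈ C ∧ ‖R - ∑ n ∈ G, x n‖ ≤ 3 / 4 * ‖R‖ := by
  rcases eq_or_ne R 0 with rfl | hR0
  · exact ⟨∅, by simp, by simp, by simpa using hR, by simp⟩
  obtain ⟨r, hr, hball⟩ := Metric.isOpen_iff.mp hC _ (hhalf R hR)
  obtain ⟨G, hGN, hGc, hGw⟩ :=
    happrox _ (hhalf R hR) (min (r / 2) (‖R‖ / 4)) (by positivity) N
  have hnorm_half : ‖(2⁻¹ : ℝ) • R‖ = ‖R‖ / 2 := by
    rw [norm_smul]; norm_num; ring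
  have hsplit : R - ∑ n ∈ G, x n = (2⁻¹ : ℝ) • R - (∑ n ∈ G, x n - (2⁻¹ : ℝ) • R) := by
    module
  refine ⟨G, hGN, by rwa [hnorm_half, ← mul_div_assoc] at hGc, ?_, ?_⟩
  · rw [hsplit]
    apply hball
    rw [Metric.mem_ball, dist_eq_norm, sub_sub_cancel_left, norm_neg]
    exact hGw.trans_lt ((min_le_left _ _).trans_lt (half_lt_self hr))
  · rw [hsplit]
    calc _ ≤ ‖R‖ / 2 + ‖R‖ / 4 :=
          (norm_sub_le _ _).trans (add_le_add hnorm_half.le (hGw.trans (min_le_right _ _)))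
      _ = 3 / 4 * ‖R‖ := by ring

lemma exists_monotone_finset_approx_of_tailApproximable (hK : 0 ≤ K) (hC : IsOpen C)
    (hhalf : ∀ w ∈ C, (2⁻¹ : ℝ) • w ∈ C) (happrox : ∀ w ∈ C, TailApproximable x (K * ‖w‖) w)
    {w : E} (hw : w ∈ C) :
    ∃ g : ℕ → Finset ℕ, Monotone g ∧ ∀ k, ‖w - ∑ n ∈ g k, x n‖ ≤ (3 / 4) ^ k * ‖w‖ ∧
      ∑ n ∈ g k, ‖x n‖ ≤ 2 * K * ‖w‖ * (1 - (3 / 4) ^ k) := by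
  choose! G hGN hGc hGC hGnorm using fun R (hR : R ∈ C) N =>
    exists_finset_sub_mem_of_tailApproximable hC hhalf happrox hR N
  let next : Finset ℕ → Finset ℕ := fun F => F ∪ G (w - ∑ n ∈ F, x n) (F.sup id + 1)
  have hnext : ∀ F, next F = F ∪ G (w - ∑ n ∈ F, x n) (F.sup id + 1) := fun _ => rfl
  have hdisj : ∀ F, ∀ R ∈ C, Disjoint F (G R (F.sup id + 1)) := fun F R hR =>
    Finset.disjoint_left.mpr fun n hnF hnG => by
      have := hGN R hR _ n hnG
      have : n ≤ F.sup id := Finset.le_sup (f := id) hnF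
      omega
  refine ⟨fun k => next^[k] ∅, monotone_nat_of_le_succ fun k => ?_, fun k => ?_⟩
  · rw [Function.iterate_succ_apply']
    exact Finset.subset_union_left
  suffices w - ∑ n ∈ next^[k] ∅, x n ∈ C ∧ ‖w - ∑ n ∈ next^[k] ∅, x n‖ ≤ (3 / 4) ^ k * ‖w‖ ∧
      ∑ n ∈ next^[k] ∅, ‖x n‖ ≤ 2 * K * ‖w‖ * (1 - (3 / 4) ^ k) from this.2
  induction k with
  | zero => simpa using hw
  | succ k ih =>
    obtain ⟨hRC, hRnorm, hcost⟩ := ih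
    set F := next^[k] ∅
    rw [Function.iterate_succ_apply', hnext, Finset.sum_union (hdisj _ _ hRC),
      Finset.sum_union (hdisj _ _ hRC), ← sub_sub]
    refine ⟨hGC _ hRC _, (hGnorm _ hRC _).trans ?_, ?_⟩
    · rw [pow_succ]; nlinarith
    · have := hGc _ hRC (F.sup id + 1)
      rw [pow_succ]
      nlinarith

theorem exists_hasSum_indicator_of_tailApproximable [CompleteSpace E] (hK : 0 ≤ K)
    (hC : IsOpen C) (hhalf : ∀ w ∈ C, (2⁻¹ : ℝ) • w ∈ C)
    (happrox : ∀ w ∈ C, TailApproximable x (K * ‖w‖) w) {w : E} (hw : w ∈ C) :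
    ∃ S : Set ℕ, Summable (fun n => ‖S.indicator x n‖) ∧ HasSum (S.indicator x) w := by
  obtain ⟨g, hg, hgk⟩ :=
    exists_monotone_finset_approx_of_tailApproximable hK hC hhalf happrox hw
  have hcost : ∀ k, ∑ n ∈ g k, ‖x n‖ ≤ 2 * K * ‖w‖ := fun k =>
    (hgk k).2.trans (mul_le_of_le_one_right (by positivity) (sub_le_self _ (by positivity)))
  have hlim : Tendsto (fun k => ∑ n ∈ g k, x n) atTop (𝓝 w) := by
    rw [tendsto_iff_norm_sub_tendsto_zero]
    refine squeeze_zero (fun _ => norm_nonneg _) (fun k => ?_) (by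
      simpa using (tendsto_pow_atTop_nhds_zero_of_lt_one (r := (3 / 4 : ℝ)) (by norm_num)
        (by norm_num)).mul_const ‖w‖)
    rw [norm_sub_rev]
    exact (hgk k).1
  exact ⟨_, summable_norm_indicator_and_hasSum_of_monotone hg hcost hlim⟩

end Exhaustion

theorem exists_hasSum_indicator_of_basis {ι E : Type*} [Fintype ι] [NormedAddCommGroup E]
    [InnerProductSpace ℝ E] (b : Module.Basis ι ℝ E) {x : ℕ → E} (hb : ∀ i, ‖b i‖ = 1)
    (hdiv : ∀ i, ConeDivergent x (b i)) (hx : Tendsto x atTop (𝓝 0)) {w : E}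
    (hw : ∀ i, 0 < b.repr w i) :
    ∃ S : Set ℕ, Summable (fun n => ‖S.indicator x n‖) ∧ HasSum (S.indicator x) w := by
  have := b.finiteDimensional_of_finite
  have := FiniteDimensional.complete ℝ E
  set L : E →L[ℝ] ι → ℝ := b.equivFunL.toContinuousLinearMap
  refine exists_hasSum_indicator_of_tailApproximable (C := {w | ∀ i, 0 < b.repr w i})
    (K := Fintype.card ι * ‖L‖) (by positivity) ?_ ?_ ?_ hw
  · simp only [Set.ofPred_forall]
    exact isOpen_iInter_of_finite fun i =>
      isOpen_lt continuous_const ((continuous_apply i).comp L.continuous)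
  · intro w hw i
    simpa using hw i
  · intro w hw
    have happrox := TailApproximable.sum (x := x) Finset.univ
      fun i _ => (hdiv i).tailApproximable (hb i) hx (hw i)
    rw [b.sum_repr] at happrox
    refine happrox.mono ?_
    calc ∑ i, b.repr w i ≤ ∑ _i : ι, ‖L w‖ := Finset.sum_le_sum fun i _ =>
          (le_abs_self _).trans (norm_le_pi_norm (L w) i)
      _ = Fintype.card ι * ‖L w‖ := by simp
      _ ≤ Fintype.card ι * ‖L‖ * ‖w‖ := by
          rw [mul_assoc]; gcongr; exact L.le_opNorm w

lemma enorm2_eq_norm (w : ℝ × ℝ) : enorm2 w = ‖WithLp.toLp 2 w‖ := by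
  simp [enorm2, WithLp.prod_norm_eq_of_L2]

lemma dot2_eq_inner (u w : ℝ × ℝ) : dot2 u w = ⟪WithLp.toLp 2 u, WithLp.toLp 2 w⟫ := by
  simp [dot2, mul_comm]

lemma IsLevy.norm_toLp {x : ℕ → ℝ × ℝ} {u : ℝ × ℝ} (h : IsLevy x u) :
    ‖WithLp.toLp 2 u‖ = 1 :=
  enorm2_eq_norm u ▸ h.1

lemma IsLevy.coneDivergent {x : ℕ → ℝ × ℝ} {u : ℝ × ℝ} (h : IsLevy x u) :
    ConeDivergent (fun n => WithLp.toLp 2 (x n)) (WithLp.toLp 2 u) := fun ε hε => by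
  simpa only [enorm2_eq_norm, dot2_eq_inner] using h.2 ε hε

lemma linearIndependent_toLp_pair {u v : ℝ × ℝ} (hu : WithLp.toLp 2 u ≠ 0)
    (hnc : ∀ c : ℝ, v ≠ c • u) : LinearIndependent ℝ ![WithLp.toLp 2 u, WithLp.toLp 2 v] :=
  (LinearIndependent.pair_iff' hu).mpr fun c h =>
    hnc c (WithLp.toLp_injective 2 (by simpa using h.symm))

theorem stmt_6 (x : ℕ → ℝ × ℝ) (hcc : CondConv x) (u v : ℝ × ℝ)
    (hu : IsLevy x u) (hv : IsLevy x v) (hnc : ∀ c : ℝ, v ≠ c • u) :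
    ∀ a b : ℝ, 0 < a → 0 < b →
      ∃ E : Set ℕ, Summable (fun n => enorm2 (Set.indicator E x n)) ∧
        HasSum (Set.indicator E x) (a • u + b • v) := by
  intro a b ha hb
  obtain ⟨⟨s, hs⟩, -⟩ := hcc
  let e := (WithLp.prodContinuousLinearEquiv 2 ℝ ℝ ℝ).symm
  have hu0 : e u ≠ 0 := ne_zero_of_norm_ne_zero (by simp [e, hu.norm_toLp])
  let B := basisOfLinearIndependentOfCardEqFinrank (linearIndependent_toLp_pair hu0 hnc)
    (by rw [(WithLp.linearEquiv 2 ℝ (ℝ × ℝ)).finrank_eq]; simp)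
  have hB : ⇑B = ![e u, e v] := coe_basisOfLinearIndependentOfCardEqFinrank _ _
  have hw : e (a • u + b • v) = a • B 0 + b • B 1 := by simp [hB]
  obtain ⟨S, hSsum, hS⟩ := exists_hasSum_indicator_of_basis B
    (by simp [Fin.forall_fin_two, hB, e, hu.norm_toLp, hv.norm_toLp])
    (by simpa [Fin.forall_fin_two, hB] using ⟨hu.coneDivergent, hv.coneDivergent⟩)
    ((e.continuous.tendsto 0).comp (tendsto_zero_of_tendsto_sum_range hs))
    (w := e (a • u + b • v)) (by simp [hw, Fin.forall_fin_two, ha, hb])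
  rw [Set.indicator_comp_of_zero (map_zero e)] at hSsum hS
  exact ⟨S, by simpa [e, enorm2_eq_norm] using hSsum, e.hasSum'.mp hS⟩
end

section
/- Let ∑ (x_n, y_n) be a series in ℝ² with the reduction property. If ∑ (x_n, y_n) is conditionally convergent, then the series ∑ x_n is not absolutely convergent, i.e. ∑ |x_n| = ∞. -/
open Filter Topology

theorem stmt_9 (x y : ℕ → ℝ) (hred : ReductionProperty x y)
    (hcc : CondConv (fun n => (x n, y n))) :
    ¬ Summable (fun n => |x n|) := by
  intro hsum
  -- tail sums are eventually < 1/4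
  have hnhds : Set.Iio (1/4 : ℝ) ∈ 𝓝 (0 : ℝ) := Iio_mem_nhds (by norm_num)
  obtain ⟨s, hs⟩ := hsum.vanishing hnhds
  set N : ℕ := (s.sup id) + 1 with hN
  obtain ⟨m, k, hm, hkmono, hk0, hclose, -⟩ :=
    hred.2 1 one_pos (3/4) (by constructor <;> norm_num) N
  set S := ∑ i ∈ Finset.range m, x (k i) with hS
  have hSgt : (1/4 : ℝ) < S := by
    have := abs_lt.mp hclose
    linarith [this.1]
  -- the image of range m under k is disjoint from s
  have hinj : Set.InjOn k (Finset.range m) := hkmono.injective.injOn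
  have hdisj : Disjoint ((Finset.range m).image k) s := by
    rw [Finset.disjoint_left]
    intro a ha has
    obtain ⟨i, hi, rfl⟩ := Finset.mem_image.mp ha
    have h1 : N ≤ k i := le_trans hk0 (hkmono.le_iff_le.mpr (Nat.zero_le i))
    have h2 : k i ≤ s.sup id := Finset.le_sup (f := id) has
    omega
  have htail : ∑ j ∈ (Finset.range m).image k, |x j| < 1/4 := hs _ hdisj
  have heq : ∑ j ∈ (Finset.range m).image k, |x j| = ∑ i ∈ Finset.range m, |x (k i)| :=
    Finset.sum_image (fun a ha b hb h => hkmono.injective h)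
  have hle : S ≤ ∑ i ∈ Finset.range m, |x (k i)| :=
    Finset.sum_le_sum fun i _ => le_abs_self _
  linarith [heq ▸ htail]
end

section
/- Let ∑ (x_n, y_n) be a conditionally convergent series in ℝ² with the reduction property. Then its set of Levy vectors equals {(0,1), (0,-1)}. -/
open Filter Topology

/-!
The ratio condition says `x = o(y)`, so the directions of the terms accumulate only at `(0, ±1)`:
for any other unit vector `u`, a narrow cone around `u` eventually contains no term at all.
Conversely, a flat term outside the cone around `(0, 1)` points downwards, so its norm is at most
`2 |y n|`; hence `‖v n‖ ≤ 3 g n - 2 y n` with `g` the cone part, and as the partial sums of `y` are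
bounded, a summable `g` would make the series absolutely convergent. Reflecting `y ↦ -y` handles
`(0, -1)`.
-/

open Finset

lemma abs_snd_le_enorm2 (v : ℝ × ℝ) : |v.2| ≤ enorm2 v :=
  Real.abs_le_sqrt (by nlinarith [sq_nonneg v.1])

lemma enorm2_le_abs_add_abs (v : ℝ × ℝ) : enorm2 v ≤ |v.1| + |v.2| :=
  Real.sqrt_le_iff.mpr ⟨by positivity, by
    nlinarith [sq_abs v.1, sq_abs v.2, mul_nonneg (abs_nonneg v.1) (abs_nonneg v.2)]⟩

lemma isLittleO_of_tendsto_abs_div_atTop {α : Type*} {l : Filter α} {x y : α → ℝ}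
    (h : Tendsto (fun n => |y n| / |x n|) l atTop) : x =o[l] y := by
  refine Asymptotics.isLittleO_iff.mpr fun δ hδ => ?_
  filter_upwards [h.eventually_ge_atTop δ⁻¹] with n hn
  rw [Real.norm_eq_abs, Real.norm_eq_abs]
  rcases eq_or_ne (x n) 0 with hx | hx
  · simp only [hx, abs_zero]
    positivity
  · rwa [le_div_iff₀ (abs_pos.mpr hx), inv_mul_le_iff₀ hδ] at hn

lemma summable_of_eventually_le_of_sum_range_le {f h : ℕ → ℝ} (hf : ∀ n, 0 ≤ f n)
    (hle : ∀ᶠ n in atTop, f n ≤ h n) {C : ℝ} (hC : ∀ M, ∑ n ∈ range M, h n ≤ C) :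
    Summable f := by
  obtain ⟨N, hN⟩ := hle.exists_forall_of_atTop
  rw [← summable_nat_add_iff N]
  refine summable_of_sum_range_le (fun n => hf _) (c := C - ∑ n ∈ range N, h n) fun M => ?_
  calc ∑ n ∈ range M, f (n + N) ≤ ∑ n ∈ range M, h (N + n) :=
        sum_le_sum fun n _ => by rw [add_comm]; exact hN _ (Nat.le_add_right N n)
    _ = ∑ n ∈ range (N + M), h n - ∑ n ∈ range N, h n := by rw [sum_range_add]; ring
    _ ≤ C - ∑ n ∈ range N, h n := by linarith [hC (N + M)]

lemma dot2_lt_mul_enorm2 {u v : ℝ × ℝ} {δ c : ℝ} (hδ : 0 ≤ δ) (hv : |v.1| ≤ δ * |v.2|)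
    (hv₂ : v.2 ≠ 0) (hc : |u.1| * δ + |u.2| < c) : dot2 u v < c * enorm2 v := by
  have hpos : 0 < |v.2| := abs_pos.mpr hv₂
  calc dot2 u v ≤ |u.1| * |v.1| + |u.2| * |v.2| := by
        unfold dot2
        rw [← abs_mul, ← abs_mul]
        exact add_le_add (le_abs_self _) (le_abs_self _)
    _ ≤ (|u.1| * δ + |u.2|) * |v.2| := by
        nlinarith [mul_le_mul_of_nonneg_left hv (abs_nonneg u.1)]
    _ < c * |v.2| := mul_lt_mul_of_pos_right hc hpos
    _ ≤ c * enorm2 v := by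
        have hc₀ : 0 ≤ c := (by positivity : 0 ≤ |u.1| * δ + |u.2|).trans hc.le
        exact mul_le_mul_of_nonneg_left (abs_snd_le_enorm2 v) hc₀

lemma fst_eq_zero_of_isLevy {v : ℕ → ℝ × ℝ} {u : ℝ × ℝ}
    (hflat : (fun n => (v n).1) =o[atTop] fun n => (v n).2)
    (hu : IsLevy v u) : u.1 = 0 := by
  obtain ⟨hunit, hdiv⟩ := hu
  have hsq : u.1 ^ 2 + u.2 ^ 2 = 1 := Real.sqrt_eq_one.mp hunit
  by_contra hu₁
  have hu₂ : |u.2| < 1 := by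
    nlinarith [sq_abs u.2, abs_nonneg u.2, pow_pos (abs_pos.mpr hu₁) 2, sq_abs u.1]
  have hu₁' : |u.1| ≤ 1 := by nlinarith [sq_abs u.2, sq_abs u.1, abs_nonneg u.1]
  -- for `ε = (1 - |u.2|) / 2`, `S_ε(u)` misses every `v ≠ 0` with `|v.1| ≤ (1 - |u.2|) / 4 * |v.2|`
  obtain ⟨N, hN⟩ := (hflat.bound (c := (1 - |u.2|) / 4) (by linarith)).exists_forall_of_atTop
  simp only [Real.norm_eq_abs] at hN
  refine hdiv ((1 - |u.2|) / 2) (by linarith) (summable_of_ne_finset_zero (s := range N) ?_)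
  intro n hn
  have hn : N ≤ n := by simpa using hn
  rcases eq_or_ne (v n).2 0 with hv₂ | hv₂
  · have hv₁ : (v n).1 = 0 := by simpa [hv₂] using hN n hn
    simp [enorm2, hv₁, hv₂]
  · refine if_neg (not_le.mpr ?_)
    rw [hunit, mul_one]
    refine dot2_lt_mul_enorm2 (by linarith) (hN n hn) hv₂ ?_
    nlinarith [abs_nonneg u.1]

lemma enorm2_le_of_abs_fst_le {v : ℝ × ℝ} {ε δ : ℝ} (hδ : 0 ≤ δ) (hδε : δ ≤ ε) (hδ1 : δ ≤ 1)
    (hv : |v.1| ≤ δ * |v.2|) :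
    enorm2 v ≤ 3 * (if (1 - ε) * enorm2 v ≤ v.2 then enorm2 v else 0) - 2 * v.2 := by
  have hle : enorm2 v ≤ (1 + δ) * |v.2| := by linarith [enorm2_le_abs_add_abs v]
  have hge := abs_snd_le_enorm2 v
  split_ifs with hcone
  · linarith [le_abs_self v.2]
  · have hneg : v.2 < 0 := by
      by_contra! hpos
      rw [abs_of_nonneg hpos] at hle hge
      rcases le_or_gt ε 1 with hε | hε
      · nlinarith [mul_le_mul_of_nonneg_left hle (sub_nonneg.mpr hε),
          mul_nonneg hpos (mul_nonneg (sub_nonneg.mpr hε) hδ), mul_nonneg hpos (sub_nonneg.mpr hδε)]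
      · nlinarith
    rw [abs_of_neg hneg] at hle
    nlinarith [abs_nonneg v.2]

lemma isLevy_zero_one {v : ℕ → ℝ × ℝ}
    (hflat : (fun n => (v n).1) =o[atTop] fun n => (v n).2)
    (hbdd : BddBelow (Set.range fun M => ∑ n ∈ range M, (v n).2))
    (hns : ¬ Summable fun n => enorm2 (v n)) : IsLevy v (0, 1) := by
  have hunit : enorm2 (0, 1) = 1 := by simp [enorm2]
  refine ⟨hunit, fun ε hε hcone => hns ?_⟩
  simp only [hunit, mul_one, dot2, zero_mul, one_mul, zero_add] at hcone
  set g := fun n => if (1 - ε) * enorm2 (v n) ≤ (v n).2 then enorm2 (v n) else 0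
  have hg : ∀ n, 0 ≤ g n := fun n => by
    simp only [g]
    split_ifs
    exacts [Real.sqrt_nonneg _, le_rfl]
  obtain ⟨b, hb⟩ := hbdd
  refine summable_of_eventually_le_of_sum_range_le (fun n => Real.sqrt_nonneg _)
    (h := fun n => 3 * g n - 2 * (v n).2) (C := 3 * ∑' n, g n - 2 * b) ?_ fun M => ?_
  · filter_upwards [hflat.bound (lt_min hε one_pos)] with n hn
    rw [Real.norm_eq_abs, Real.norm_eq_abs] at hn
    exact enorm2_le_of_abs_fst_le (le_min hε.le zero_le_one) (min_le_left _ _)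
      (min_le_right _ _) hn
  · rw [sum_sub_distrib, ← mul_sum, ← mul_sum]
    linarith [hcone.sum_le_tsum (range M) fun n _ => hg n, hb (Set.mem_range_self M)]

lemma isLevy_zero_neg_one_iff {v : ℕ → ℝ × ℝ} :
    IsLevy v (0, -1) ↔ IsLevy (fun n => ((v n).1, -(v n).2)) (0, 1) := by
  simp [IsLevy, enorm2, dot2]

lemma eq_zero_one_or_eq_zero_neg_one {u : ℝ × ℝ} (hunit : enorm2 u = 1) (hu₁ : u.1 = 0) :
    u = (0, 1) ∨ u = (0, -1) := by
  have hsq : u.2 ^ 2 = 1 := by simpa [enorm2, hu₁] using hunit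
  rcases sq_eq_one_iff.mp hsq with hu₂ | hu₂
  exacts [Or.inl (Prod.ext hu₁ hu₂), Or.inr (Prod.ext hu₁ hu₂)]

theorem stmt_11 (x y : ℕ → ℝ) (hred : ReductionProperty x y)
    (hcc : CondConv (fun n => (x n, y n))) :
    {u : ℝ × ℝ | IsLevy (fun n => (x n, y n)) u} = {((0 : ℝ), (1 : ℝ)), ((0 : ℝ), (-1 : ℝ))} := by
  obtain ⟨⟨s, hs⟩, hns⟩ := hcc
  have hflat : x =o[atTop] y := isLittleO_of_tendsto_abs_div_atTop hred.1
  have hy : Tendsto (fun M => ∑ n ∈ range M, y n) atTop (𝓝 s.2) := by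
    simpa [Function.comp_def, Prod.snd_sum] using (continuous_snd.tendsto s).comp hs
  ext u
  constructor
  · intro hu
    exact eq_zero_one_or_eq_zero_neg_one hu.1 (fst_eq_zero_of_isLevy hflat hu)
  · rintro (rfl | rfl)
    · exact isLevy_zero_one hflat hy.bddBelow_range hns
    · refine isLevy_zero_neg_one_iff.mpr
        (isLevy_zero_one hflat.neg_right ?_ (by simpa [enorm2] using hns))
      simpa [sum_neg_distrib] using hy.neg.bddBelow_range
end

section
/- Let ∑ (x_n, y_n) be a conditionally convergent series in ℝ² with the reduction property. Then its achievement set is all of ℝ²: for every (a,b) ∈ ℝ² there exists a set E ⊆ ℕ such that ∑_{n∈E} (x_n, y_n) converges (as a subseries, summed in increasing order of indices) to (a,b). -/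
open Filter Topology

open Finset

lemma aux_enorm_le (u v : ℝ) : enorm2 (u, v) ≤ |u| + |v| := by
  have h : (u ^ 2 + v ^ 2) ≤ (|u| + |v|) ^ 2 := by
    nlinarith [abs_nonneg u, abs_nonneg v, sq_abs u, sq_abs v,
      mul_nonneg (abs_nonneg u) (abs_nonneg v)]
  calc enorm2 (u, v) ≤ Real.sqrt ((|u| + |v|) ^ 2) := Real.sqrt_le_sqrt h
    _ = |u| + |v| := Real.sqrt_sq (by positivity)

lemma aux_absy (x y : ℕ → ℝ)
    (h1 : Tendsto (fun n => |y n| / |x n|) atTop atTop)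
    (habs : ¬ Summable (fun n => enorm2 (x n, y n))) :
    ¬ Summable (fun n => |y n|) := by
  intro hs
  apply habs
  obtain ⟨N, hN⟩ := (h1.eventually_ge_atTop 2).exists_forall_of_atTop
  have hratio : ∀ n ≥ N, |x n| ≤ |y n| := by
    intro n hn
    have h2 := hN n hn
    rcases eq_or_ne (x n) 0 with hx | hx
    · rw [hx, abs_zero]; positivity
    · have hxpos : 0 < |x n| := abs_pos.mpr hx
      rw [le_div_iff₀ hxpos] at h2
      nlinarith
  rw [← summable_nat_add_iff N]
  refine Summable.of_nonneg_of_le (fun n => Real.sqrt_nonneg _) (fun n => ?_)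
    (((summable_nat_add_iff N).2 hs).mul_left 2)
  calc enorm2 (x (n + N), y (n + N)) ≤ |x (n + N)| + |y (n + N)| := aux_enorm_le _ _
      _ ≤ 2 * |y (n + N)| := by
          have := hratio (n + N) (Nat.le_add_left _ _); linarith



lemma max_neg_eq (t : ℝ) : max (-t) 0 = max t 0 - t := by
  rcases le_total t 0 with h | h
  · rw [max_eq_left (neg_nonneg.2 h), max_eq_right h]; ring
  · rw [max_eq_right (neg_nonpos.2 h), max_eq_left h]; ring

lemma abs_eq_maxs (t : ℝ) : |t| = max t 0 + max (-t) 0 := by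
  rcases le_total t 0 with h | h
  · rw [abs_of_nonpos h, max_eq_left (neg_nonneg.2 h), max_eq_right h]; ring
  · rw [abs_of_nonneg h, max_eq_right (neg_nonpos.2 h), max_eq_left h]; ring

lemma aux_pos (y : ℕ → ℝ) (sy : ℝ)
    (hy : Tendsto (fun N => ∑ n ∈ range N, y n) atTop (𝓝 sy))
    (habs : ¬ Summable (fun n => |y n|)) (s : ℝ) (hs : s = 1 ∨ s = -1) :
    ¬ Summable (fun n => max (s * y n) 0) := by
  intro hp
  apply habs
  have hsy : Tendsto (fun N => ∑ n ∈ range N, s * y n) atTop (𝓝 (s * sy)) := by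
    simpa [← Finset.mul_sum] using hy.const_mul s
  obtain ⟨C, hC⟩ : ∃ C, ∀ M, -(∑ n ∈ range M, s * y n) ≤ C := by
    obtain ⟨C, hC⟩ := hsy.bddBelow_range
    exact ⟨-C, fun M => by have := hC (Set.mem_range_self M); linarith⟩
  have hq : Summable (fun n => max (-(s * y n)) 0) := by
    apply summable_of_sum_range_le (c := (∑' n, max (s * y n) 0) + C)
    · intro n; positivity
    · intro M
      have heq : ∑ n ∈ range M, max (-(s * y n)) 0
          = (∑ n ∈ range M, max (s * y n) 0) - ∑ n ∈ range M, s * y n := by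
        rw [← Finset.sum_sub_distrib]; exact Finset.sum_congr rfl fun n _ => max_neg_eq _
      rw [heq]
      have h2 : (∑ n ∈ range M, max (s * y n) 0) ≤ ∑' n, max (s * y n) 0 :=
        Summable.sum_le_tsum (range M) (fun n _ => le_max_right _ _) hp
      have := hC M; linarith
  have hsum : Summable (fun n => max (s * y n) 0 + max (-(s * y n)) 0) := hp.add hq
  refine hsum.congr fun n => ?_
  rw [← abs_eq_maxs, abs_mul]
  rcases hs with h | h <;> simp [h]



lemma aux_div (x y : ℕ → ℝ)
    (h1 : Tendsto (fun n => |y n| / |x n|) atTop atTop)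
    (hy0 : Tendsto y atTop (𝓝 0))
    (hpos : ∀ s : ℝ, s = 1 ∨ s = -1 → ¬ Summable (fun n => max (s * y n) 0))
    (s : ℝ) (hs : s = 1 ∨ s = -1) (N₁ : ℕ) (θ η : ℝ) (hθ : 0 < θ) (hη : 0 < η) :
    ¬ Summable (fun n => if N₁ ≤ n ∧ 0 < s * y n ∧ |x n| ≤ η * |y n| ∧ |y n| < θ
      then s * y n else 0) := by
  intro hsum
  -- eventually the side conditions hold
  have hrat : ∀ᶠ n in atTop, |x n| ≤ η * |y n| := by
    filter_upwards [h1.eventually_ge_atTop (2 / η)] with n hn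
    rcases eq_or_ne (x n) 0 with hx | hx
    · rw [hx, abs_zero]; positivity
    · have hxpos : 0 < |x n| := abs_pos.mpr hx
      rw [div_le_div_iff₀ hη hxpos] at hn
      nlinarith [abs_nonneg (y n)]
  have hsmall : ∀ᶠ n in atTop, |y n| < θ := by
    have := hy0.abs
    simpa using this.eventually (gt_mem_nhds (by simpa using hθ))
  obtain ⟨N₂, hN₂⟩ := ((hrat.and hsmall).and (eventually_ge_atTop N₁)).exists_forall_of_atTop
  apply hpos s hs
  rw [← summable_nat_add_iff N₂] at hsum ⊢
  refine hsum.congr fun n => ?_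
  obtain ⟨⟨hr, hsm⟩, hge⟩ := hN₂ (n + N₂) (Nat.le_add_left _ _)
  by_cases hpy : 0 < s * y (n + N₂)
  · rw [if_pos ⟨hge, hpy, hr, hsm⟩, max_eq_left hpy.le]
  · rw [if_neg (by tauto), max_eq_right (not_lt.1 hpy)]

lemma aux_downward (k : ℕ → ℕ) (hk : StrictMono k) (m M : ℕ) :
    ∃ j ≤ m, (range m).filter (fun i => k i < M) = range j := by
  induction m with
  | zero => exact ⟨0, le_refl 0, by simp⟩
  | succ m ih =>
    obtain ⟨j, hj, hje⟩ := ih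
    by_cases hm : k m < M
    · refine ⟨m + 1, le_refl _, ?_⟩
      rw [Finset.filter_true_of_mem]
      intro i hi
      exact lt_of_le_of_lt (hk.monotone (Nat.lt_succ_iff.1 (Finset.mem_range.1 hi))) hm
    · refine ⟨j, hj.trans (Nat.le_succ m), ?_⟩
      rw [Finset.range_add_one, Finset.filter_insert, if_neg hm, hje]



lemma phaseY (x y : ℕ → ℝ) (s : ℝ) (hs : s = 1 ∨ s = -1) (N₁ : ℕ) (θ η T : ℝ)
    (hθ : 0 < θ) (hT : 0 ≤ T)
    (hns : ¬ Summable (fun n => if N₁ ≤ n ∧ 0 < s * y n ∧ |x n| ≤ η * |y n| ∧ |y n| < θ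
      then s * y n else 0)) :
    ∃ S₂ : Finset ℕ, ∃ M₂ : ℕ,
      (∀ n ∈ S₂, n < M₂) ∧
      (∀ n ∈ S₂, N₁ ≤ n ∧ 0 < s * y n ∧ |x n| ≤ η * |y n|) ∧
      T ≤ (∑ n ∈ S₂, s * y n) ∧ (∑ n ∈ S₂, s * y n) < T + θ := by
  classical
  set Q : ℕ → Prop := fun n => N₁ ≤ n ∧ 0 < s * y n ∧ |x n| ≤ η * |y n| ∧ |y n| < θ with hQ
  set h : ℕ → ℝ := fun n => if Q n then s * y n else 0 with hh
  have hnn : ∀ n, 0 ≤ h n := by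
    intro n; rw [hh]; dsimp only; split
    · next hq => exact hq.2.1.le
    · exact le_refl 0
  have habs1 : |s| = 1 := by rcases hs with h | h <;> simp [h]
  have hbd : ∀ n, h n < θ := by
    intro n; rw [hh]; dsimp only; split
    · next hq =>
      calc s * y n ≤ |s * y n| := le_abs_self _
        _ = |y n| := by rw [abs_mul, habs1, one_mul]
        _ < θ := hq.2.2.2
    · exact hθ
  have htop : Tendsto (fun M => ∑ n ∈ range M, h n) atTop atTop :=
    (not_summable_iff_tendsto_nat_atTop_of_nonneg hnn).1 hns
  have hex : ∃ M, T ≤ ∑ n ∈ range M, h n := (htop.eventually_ge_atTop T).exists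
  set M₂ := Nat.find hex with hM₂
  refine ⟨(range M₂).filter Q, M₂, ?_, ?_, ?_, ?_⟩
  · intro n hn
    exact Finset.mem_range.1 (Finset.mem_filter.1 hn).1
  · intro n hn
    obtain ⟨-, hq⟩ := Finset.mem_filter.1 hn
    exact ⟨hq.1, hq.2.1, hq.2.2.1⟩
  · rw [Finset.sum_filter]
    exact Nat.find_spec hex
  · rw [Finset.sum_filter]
    show (∑ n ∈ range M₂, h n) < T + θ
    rcases Nat.eq_zero_or_pos M₂ with h0 | h0
    · rw [h0]; simpa using lt_of_le_of_lt hT (lt_add_of_pos_right T hθ)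
    · obtain ⟨M', hM'⟩ : ∃ M', M₂ = M' + 1 := ⟨M₂ - 1, (Nat.succ_pred_eq_of_pos h0).symm⟩
      have hmin : ¬ T ≤ ∑ n ∈ range M', h n := by apply Nat.find_min hex; omega
      rw [hM', Finset.sum_range_succ]
      have := hbd M'
      push_neg at hmin
      linarith

lemma step_lemma (x y : ℕ → ℝ) (a b : ℝ)
    (hred2 : ∀ ε : ℝ, 0 < ε → ∀ t ∈ Set.Ioo (-ε) ε, ∀ N : ℕ,
      ∃ m : ℕ, ∃ k : ℕ → ℕ, 0 < m ∧ StrictMono k ∧ N ≤ k 0 ∧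
        |(∑ i ∈ Finset.range m, x (k i)) - t| < ε / 2 ∧
        ∀ j : ℕ, 1 ≤ j → j ≤ m →
          |∑ i ∈ Finset.range j, x (k i)| < ε ∧ |∑ i ∈ Finset.range j, y (k i)| < ε)
    (hdiv : ∀ s : ℝ, s = 1 ∨ s = -1 → ∀ N₁ : ℕ, ∀ θ η : ℝ, 0 < θ → 0 < η →
      ¬ Summable (fun n => if N₁ ≤ n ∧ 0 < s * y n ∧ |x n| ≤ η * |y n| ∧ |y n| < θ
        then s * y n else 0))
    (δ : ℝ) (hδ : 0 < δ) (N : ℕ) (F : Finset ℕ) (hF : ∀ n ∈ F, n < N)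
    (hA : |(∑ n ∈ F, x n) - a| < δ) (hB : |(∑ n ∈ F, y n) - b| < δ) :
    ∃ N' : ℕ, ∃ F' : Finset ℕ, N < N' ∧ F ⊆ F' ∧ (∀ n ∈ F', n < N') ∧
      (∀ n ∈ F', n ∉ F → N ≤ n) ∧
      |(∑ n ∈ F', x n) - a| < 3 / 4 * δ ∧ |(∑ n ∈ F', y n) - b| < 3 / 4 * δ ∧
      ∀ M, N ≤ M →
        |(∑ n ∈ F'.filter (· < M), x n) - a| ≤ 2 * δ ∧
        |(∑ n ∈ F'.filter (· < M), y n) - b| ≤ 2 * δ := by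
  classical
  set A := ∑ n ∈ F, x n with hA_def
  set B := ∑ n ∈ F, y n with hB_def
  -- Phase X : apply the reduction property with target t = a - A
  obtain ⟨m, k, hm, hk, hk0, hsumx, hpart⟩ :=
    hred2 δ hδ (a - A) ⟨by cases abs_lt.1 hA; linarith, by cases abs_lt.1 hA; linarith⟩ N
  set S₁ : Finset ℕ := (range m).image k with hS₁_def
  set N₁ : ℕ := k (m - 1) + 1 with hN₁_def
  have hkinj : ∀ i ∈ range m, ∀ j ∈ range m, k i = k j → i = j :=
    fun i _ j _ h => hk.injective h
  have hS₁x : ∑ n ∈ S₁, x n = ∑ i ∈ range m, x (k i) := Finset.sum_image hkinj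
  have hS₁y : ∑ n ∈ S₁, y n = ∑ i ∈ range m, y (k i) := Finset.sum_image hkinj
  have hS₁mem : ∀ n ∈ S₁, N ≤ n ∧ n < N₁ := by
    intro n hn
    obtain ⟨i, hi, rfl⟩ := Finset.mem_image.1 hn
    have hi' := Finset.mem_range.1 hi
    constructor
    · exact le_trans hk0 (hk.monotone (Nat.zero_le i))
    · have : k i ≤ k (m - 1) := hk.monotone (by omega)
      omega
  have hNN₁ : N < N₁ := by
    have := (hS₁mem (k 0) (Finset.mem_image.2 ⟨0, Finset.mem_range.2 hm, rfl⟩))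
    omega
  set A₁ := A + ∑ i ∈ range m, x (k i) with hA₁_def
  set B₁ := B + ∑ i ∈ range m, y (k i) with hB₁_def
  have hA₁ : |A₁ - a| < δ / 2 := by
    have : A₁ - a = (∑ i ∈ range m, x (k i)) - (a - A) := by ring
    rw [this]; exact hsumx
  have hB₁ : |B₁ - b| < 2 * δ := by
    have h1 := (hpart m hm le_rfl).2
    have h2 : B₁ - b = (B - b) + ∑ i ∈ range m, y (k i) := by rw [hB₁_def]; ring
    calc |B₁ - b| ≤ |B - b| + |∑ i ∈ range m, y (k i)| := by rw [h2]; exact abs_add_le _ _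
      _ < 2 * δ := by linarith
  -- Phase Y
  set s : ℝ := if B₁ ≤ b then 1 else -1 with hs_def
  have hs : s = 1 ∨ s = -1 := by rw [hs_def]; split <;> simp
  have hss : s * s = 1 := by rcases hs with h | h <;> rw [h] <;> norm_num
  set T := s * (b - B₁) with hT_def
  have hTeq : T = |b - B₁| := by
    rw [hT_def, hs_def]; rcases le_total B₁ b with h | h
    · rw [if_pos h, one_mul, abs_of_nonneg (by linarith)]
    · rcases eq_or_lt_of_le h with h' | h'
      · simp [h'.symm]
      · rw [if_neg (by linarith), abs_of_nonpos (by linarith)]; ring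
  have hTnn : 0 ≤ T := hTeq ▸ abs_nonneg _
  have hT2δ : T < 2 * δ := by rw [hTeq, abs_sub_comm]; exact hB₁
  obtain ⟨S₂, M₂, hS₂lt, hS₂mem, hcle, hclt⟩ :=
    phaseY x y s hs N₁ (δ / 4) (1 / 9) T (by linarith) hTnn
      (hdiv s hs N₁ (δ / 4) (1 / 9) (by linarith) (by norm_num))
  set c := ∑ n ∈ S₂, s * y n with hc_def
  have hcsmall : c < 9 / 4 * δ := by linarith
  -- generic bounds for subsets of S₂
  have hS₂gen : ∀ S' ⊆ S₂, 0 ≤ (∑ n ∈ S', s * y n) ∧ (∑ n ∈ S', s * y n) ≤ c ∧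
      (∑ n ∈ S', y n) = s * (∑ n ∈ S', s * y n) ∧
      |∑ n ∈ S', x n| ≤ 1 / 9 * c := by
    intro S' hsub
    have hpos : ∀ n ∈ S', 0 < s * y n := fun n hn => (hS₂mem n (hsub hn)).2.1
    have h0 : 0 ≤ ∑ n ∈ S', s * y n := Finset.sum_nonneg fun n hn => (hpos n hn).le
    have hle : (∑ n ∈ S', s * y n) ≤ c :=
      Finset.sum_le_sum_of_subset_of_nonneg hsub
        (fun n hn _ => le_of_lt ((hS₂mem n hn).2.1))
    have habs_y : ∀ n ∈ S', |y n| = s * y n := by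
      intro n hn
      have h1 : |s * y n| = s * y n := abs_of_pos (hpos n hn)
      have h2 : |s| = 1 := by rcases hs with h | h <;> simp [h]
      rw [← one_mul |y n|, ← h2, ← abs_mul, h1]
    refine ⟨h0, hle, ?_, ?_⟩
    · rw [Finset.mul_sum]
      refine Finset.sum_congr rfl fun n hn => ?_
      rw [← mul_assoc, hss, one_mul]
    · calc |∑ n ∈ S', x n| ≤ ∑ n ∈ S', |x n| := Finset.abs_sum_le_sum_abs _ _
        _ ≤ ∑ n ∈ S', 1 / 9 * (s * y n) := by
            refine Finset.sum_le_sum fun n hn => ?_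
            have := (hS₂mem n (hsub hn)).2.2
            rw [habs_y n hn] at this; exact this
        _ = 1 / 9 * ∑ n ∈ S', s * y n := by rw [Finset.mul_sum]
        _ ≤ 1 / 9 * c := by linarith
  have habs_s : |s| = 1 := by rcases hs with h | h <;> simp [h]
  have hsT : s * T = b - B₁ := by rw [hT_def, ← mul_assoc, hss, one_mul]
  -- Assemble
  set N' : ℕ := max N₁ M₂ with hN'_def
  set F' : Finset ℕ := F ∪ S₁ ∪ S₂ with hF'_def
  have hS₂N₁ : ∀ n ∈ S₂, N₁ ≤ n := fun n hn => (hS₂mem n hn).1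
  have hd1 : Disjoint F S₁ := by
    rw [Finset.disjoint_left]
    intro n hn hn'
    exact absurd (hS₁mem n hn').1 (by have := hF n hn; omega)
  have hd2 : Disjoint (F ∪ S₁) S₂ := by
    rw [Finset.disjoint_left]
    intro n hn hn'
    have h2 := hS₂N₁ n hn'
    rcases Finset.mem_union.1 hn with h | h
    · have := hF n h; omega
    · have := (hS₁mem n h).2; omega
  -- a sum-splitting helper for filtered versions
  have hsplit : ∀ (f : ℕ → ℝ) (p : ℕ → Prop) (hp : DecidablePred p),
      ∑ n ∈ @Finset.filter _ p hp F', f n =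
        (∑ n ∈ @Finset.filter _ p hp F, f n) + (∑ n ∈ @Finset.filter _ p hp S₁, f n)
          + (∑ n ∈ @Finset.filter _ p hp S₂, f n) := by
    intro f p hp
    rw [hF'_def, Finset.filter_union, Finset.filter_union,
      Finset.sum_union (Finset.disjoint_union_left.2
        ⟨Finset.disjoint_filter_filter (Finset.disjoint_union_left.1 hd2).1,
         Finset.disjoint_filter_filter (Finset.disjoint_union_left.1 hd2).2⟩),
      Finset.sum_union (Finset.disjoint_filter_filter hd1)]
  have hsplit' : ∀ f : ℕ → ℝ,
      ∑ n ∈ F', f n = (∑ n ∈ F, f n) + (∑ n ∈ S₁, f n) + (∑ n ∈ S₂, f n) := by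
    intro f
    rw [hF'_def, Finset.sum_union hd2, Finset.sum_union hd1]
  -- bounds on filtered S₁ sums
  have hS₁f : ∀ M : ℕ, |∑ n ∈ S₁.filter (· < M), x n| ≤ δ ∧
      |∑ n ∈ S₁.filter (· < M), y n| ≤ δ := by
    intro M
    obtain ⟨j, hj, hje⟩ := aux_downward k hk m M
    have himg : S₁.filter (· < M) = (range j).image k := by
      rw [hS₁_def, Finset.filter_image, hje]
    have hinj : ∀ i ∈ range j, ∀ i' ∈ range j, k i = k i' → i = i' :=
      fun i _ i' _ h => hk.injective h
    rw [himg, Finset.sum_image hinj, Finset.sum_image hinj]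
    rcases Nat.eq_zero_or_pos j with h0 | h0
    · rw [h0]; simp [hδ.le]
    · exact ⟨(hpart j h0 hj).1.le, (hpart j h0 hj).2.le⟩
  have hS₂full := hS₂gen S₂ (Finset.Subset.refl _)
  have hSyS₂ : ∑ n ∈ S₂, y n = s * c := hS₂full.2.2.1
  have hSxS₂ : |∑ n ∈ S₂, x n| ≤ 1 / 9 * c := hS₂full.2.2.2
  refine ⟨N', F', ?_, ?_, ?_, ?_, ?_, ?_, ?_⟩
  · exact lt_of_lt_of_le hNN₁ (le_max_left _ _)
  · rw [hF'_def]; exact (Finset.subset_union_left).trans Finset.subset_union_left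
  · intro n hn
    rcases Finset.mem_union.1 hn with hn' | hn'
    · rcases Finset.mem_union.1 hn' with h | h
      · have := hF n h; have := hNN₁; omega
      · have := (hS₁mem n h).2; have h2 := le_max_left N₁ M₂; omega
    · have := hS₂lt n hn'; have h2 := le_max_right N₁ M₂; omega
  · intro n hn hnF
    rcases Finset.mem_union.1 hn with hn' | hn'
    · rcases Finset.mem_union.1 hn' with h | h
      · exact absurd h hnF
      · exact (hS₁mem n h).1
    · have := hS₂N₁ n hn'; omega
  · -- final x bound
    have heq : ∑ n ∈ F', x n = A₁ + ∑ n ∈ S₂, x n := by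
      rw [hsplit' x, hA₁_def, hS₁x]
    rw [heq]
    have h1 : |A₁ + (∑ n ∈ S₂, x n) - a| ≤ |A₁ - a| + |∑ n ∈ S₂, x n| := by
      have : A₁ + (∑ n ∈ S₂, x n) - a = (A₁ - a) + ∑ n ∈ S₂, x n := by ring
      rw [this]; exact abs_add_le _ _
    linarith
  · -- final y bound
    have heq : ∑ n ∈ F', y n = B₁ + s * c := by
      rw [hsplit' y, hB₁_def, hS₁y, hSyS₂]
    rw [heq]
    have h1 : B₁ + s * c - b = s * (c - T) := by rw [mul_sub, hsT]; ring
    rw [h1, abs_mul, habs_s, one_mul]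
    rw [abs_of_nonneg (by linarith)]
    linarith
  · -- prefix bounds
    intro M hM
    have hFfil : F.filter (· < M) = F :=
      Finset.filter_true_of_mem fun n hn => lt_of_lt_of_le (hF n hn) hM
    have hx := hsplit x (· < M) inferInstance
    have hy := hsplit y (· < M) inferInstance
    rw [hFfil] at hx hy
    rcases le_or_gt M N₁ with hMN | hMN
    · have hS₂e : S₂.filter (· < M) = ∅ := by
        apply Finset.filter_false_of_mem
        intro n hn
        have := hS₂N₁ n hn; omega
      rw [hS₂e, Finset.sum_empty, add_zero] at hx hy
      obtain ⟨hbx, hby⟩ := hS₁f M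
      constructor
      · rw [hx]
        have : A + (∑ n ∈ S₁.filter (· < M), x n) - a
            = (A - a) + ∑ n ∈ S₁.filter (· < M), x n := by ring
        calc |A + (∑ n ∈ S₁.filter (· < M), x n) - a|
            ≤ |A - a| + |∑ n ∈ S₁.filter (· < M), x n| := by rw [this]; exact abs_add_le _ _
          _ ≤ 2 * δ := by linarith
      · rw [hy]
        have : B + (∑ n ∈ S₁.filter (· < M), y n) - b
            = (B - b) + ∑ n ∈ S₁.filter (· < M), y n := by ring
        calc |B + (∑ n ∈ S₁.filter (· < M), y n) - b|
            ≤ |B - b| + |∑ n ∈ S₁.filter (· < M), y n| := by rw [this]; exact abs_add_le _ _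
          _ ≤ 2 * δ := by linarith
    · have hS₁fil : S₁.filter (· < M) = S₁ :=
        Finset.filter_true_of_mem fun n hn => by have := (hS₁mem n hn).2; omega
      rw [hS₁fil] at hx hy
      obtain ⟨hcM0, hcMle, hyeq, hxb⟩ := hS₂gen (S₂.filter (· < M)) (Finset.filter_subset _ _)
      set cM := ∑ n ∈ S₂.filter (· < M), s * y n with hcM_def
      constructor
      · rw [hx]
        have h1 : A + (∑ n ∈ S₁, x n) + (∑ n ∈ S₂.filter (· < M), x n) - a
            = (A₁ - a) + ∑ n ∈ S₂.filter (· < M), x n := by rw [hA₁_def, hS₁x]; ring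
        calc |A + (∑ n ∈ S₁, x n) + (∑ n ∈ S₂.filter (· < M), x n) - a|
            ≤ |A₁ - a| + |∑ n ∈ S₂.filter (· < M), x n| := by rw [h1]; exact abs_add_le _ _
          _ ≤ 2 * δ := by linarith
      · rw [hy, hyeq]
        have h1 : B + (∑ n ∈ S₁, y n) + s * cM - b = s * (cM - T) := by
          rw [mul_sub, hsT, hB₁_def, hS₁y]; ring
        rw [h1, abs_mul, habs_s, one_mul]
        rw [abs_le]
        constructor <;> linarith

lemma exists_chain {α : Type*} (Inv : ℕ → α → Prop) (Rel : ℕ → α → α → Prop)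
    (p0 : α) (h0 : Inv 0 p0)
    (hstep : ∀ m p, Inv m p → ∃ q, Inv (m + 1) q ∧ Rel m p q) :
    ∃ f : ℕ → α, f 0 = p0 ∧ (∀ m, Inv m (f m)) ∧ ∀ m, Rel m (f m) (f (m + 1)) := by
  choose! g hg1 hg2 using hstep
  refine ⟨fun m => Nat.rec p0 (fun m p => g m p) m, rfl, ?_, ?_⟩
  · intro m
    induction m with
    | zero => exact h0
    | succ m ih => exact hg1 m _ ih
  · intro m
    have hInv : ∀ m, Inv m (Nat.rec p0 (fun m p => g m p) m : α) := by
      intro m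
      induction m with
      | zero => exact h0
      | succ m ih => exact hg1 m _ ih
    exact hg2 m _ (hInv m)

theorem main_aux (x y : ℕ → ℝ)
    (hstep0 : ∀ (a b δ : ℝ), 0 < δ → ∀ (N : ℕ) (F : Finset ℕ), (∀ n ∈ F, n < N) →
      |(∑ n ∈ F, x n) - a| < δ → |(∑ n ∈ F, y n) - b| < δ →
      ∃ N' : ℕ, ∃ F' : Finset ℕ, N < N' ∧ F ⊆ F' ∧ (∀ n ∈ F', n < N') ∧
        (∀ n ∈ F', n ∉ F → N ≤ n) ∧
        |(∑ n ∈ F', x n) - a| < 3 / 4 * δ ∧ |(∑ n ∈ F', y n) - b| < 3 / 4 * δ ∧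
        ∀ M, N ≤ M →
          |(∑ n ∈ F'.filter (· < M), x n) - a| ≤ 2 * δ ∧
          |(∑ n ∈ F'.filter (· < M), y n) - b| ≤ 2 * δ) :
    ∀ p : ℝ × ℝ, Achieves (fun n => (x n, y n)) p := by
  classical
  rintro ⟨a, b⟩
  set D : ℝ := |a| + |b| + 1 with hD_def
  have hD : 0 < D := by positivity
  set δ : ℕ → ℝ := fun m => D * (3 / 4 : ℝ) ^ m with hδ_def
  have hδpos : ∀ m, 0 < δ m := fun m => by positivity
  have hδsucc : ∀ m, δ (m + 1) = 3 / 4 * δ m := by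
    intro m; rw [hδ_def]; dsimp only; rw [pow_succ]; ring
  have hδanti : ∀ m m', m ≤ m' → δ m' ≤ δ m := by
    intro m m' h
    induction m' with
    | zero => rw [Nat.le_zero.1 h]
    | succ m' ih =>
      rcases Nat.lt_or_ge m (m' + 1) with h' | h'
      · have h1 := ih (by omega)
        have h2 := hδpos m'
        rw [hδsucc m']; linarith
      · have : m = m' + 1 := by omega
        rw [this]
  set Inv : ℕ → ℕ × Finset ℕ → Prop := fun m p =>
    (∀ n ∈ p.2, n < p.1) ∧ |(∑ n ∈ p.2, x n) - a| < δ m ∧ |(∑ n ∈ p.2, y n) - b| < δ m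
    with hInv_def
  set Rel : ℕ → ℕ × Finset ℕ → ℕ × Finset ℕ → Prop := fun m p q =>
    p.1 < q.1 ∧ p.2 ⊆ q.2 ∧ (∀ n ∈ q.2, n ∉ p.2 → p.1 ≤ n) ∧
    ∀ M, p.1 ≤ M →
      |(∑ n ∈ q.2.filter (· < M), x n) - a| ≤ 2 * δ m ∧
      |(∑ n ∈ q.2.filter (· < M), y n) - b| ≤ 2 * δ m
    with hRel_def
  have h0 : Inv 0 (0, (∅ : Finset ℕ)) := by
    refine ⟨by simp, ?_, ?_⟩ <;>
      · show |(∑ n ∈ (∅ : Finset ℕ), _) - _| < δ 0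
        rw [Finset.sum_empty, zero_sub, abs_neg, hδ_def]
        simp only [pow_zero, mul_one]
        rw [hD_def]
        linarith [abs_nonneg a, abs_nonneg b]
  have hstep' : ∀ m p, Inv m p → ∃ q, Inv (m + 1) q ∧ Rel m p q := by
    rintro m ⟨N, F⟩ ⟨h1, h2, h3⟩
    obtain ⟨N', F', hNN', hFF', hbound, hnew, hx', hy', hpre⟩ :=
      hstep0 a b (δ m) (hδpos m) N F h1 h2 h3
    exact ⟨(N', F'), ⟨hbound, by rw [hδsucc]; exact hx', by rw [hδsucc]; exact hy'⟩,
      hNN', hFF', hnew, hpre⟩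
  obtain ⟨f, hf0, hInv, hRel⟩ := exists_chain Inv Rel _ h0 hstep'
  set Nf : ℕ → ℕ := fun m => (f m).1 with hNf_def
  set Ff : ℕ → Finset ℕ := fun m => (f m).2 with hFf_def
  have hNmono : ∀ m, Nf m < Nf (m + 1) := fun m => (hRel m).1
  have hsub : ∀ m, Ff m ⊆ Ff (m + 1) := fun m => (hRel m).2.1
  have hsub' : ∀ i j, i ≤ j → Ff i ⊆ Ff j := by
    intro i j hij
    induction j with
    | zero => rw [Nat.le_zero.1 hij]
    | succ j ih =>
      rcases Nat.lt_or_ge i (j + 1) with h' | h'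
      · exact (ih (by omega)).trans (hsub j)
      · have : i = j + 1 := by omega
        rw [this]
  have hN' : ∀ i j, i ≤ j → Nf i ≤ Nf j := by
    intro i j hij
    induction j with
    | zero => rw [Nat.le_zero.1 hij]
    | succ j ih =>
      rcases Nat.lt_or_ge i (j + 1) with h' | h'
      · exact le_trans (ih (by omega)) (hNmono j).le
      · have : i = j + 1 := by omega
        rw [this]
  have hNgrow : ∀ m, m ≤ Nf m := by
    intro m
    induction m with
    | zero => exact Nat.zero_le _
    | succ m ih => have := hNmono m; omega
  have hkey : ∀ m k n, n ∈ Ff k → n < Nf (m + 1) → n ∈ Ff (m + 1) := by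
    intro m k
    induction k with
    | zero => intro n hn _; exact hsub' 0 (m + 1) (Nat.zero_le _) hn
    | succ k ih =>
      intro n hn hlt
      rcases Nat.lt_or_ge k (m + 1) with h' | h'
      · exact hsub' (k + 1) (m + 1) (by omega) hn
      · by_cases hk : n ∈ Ff k
        · exact ih n hk hlt
        · have h1 : Nf k ≤ n := (hRel k).2.2.1 n hn hk
          have h2 : Nf (m + 1) ≤ Nf k := hN' (m + 1) k h'
          omega
  set E : Set ℕ := {n | ∃ m, n ∈ Ff m} with hE_def
  have hEdec : ∀ M m, Nf m ≤ M → M ≤ Nf (m + 1) →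
      (range M).filter (· ∈ E) = (Ff (m + 1)).filter (· < M) := by
    intro M m h1 h2
    ext n
    simp only [Finset.mem_filter, Finset.mem_range, hE_def, Set.mem_setOf_eq]
    constructor
    · rintro ⟨hnM, m', hm'⟩
      exact ⟨hkey m m' n hm' (lt_of_lt_of_le hnM h2), hnM⟩
    · rintro ⟨hmem, hlt⟩
      exact ⟨hlt, m + 1, hmem⟩
  refine ⟨E, ?_⟩
  rw [ConvergesTo]
  set gx : ℕ → ℝ := fun M => ∑ n ∈ (range M).filter (· ∈ E), x n with hgx_def
  set gy : ℕ → ℝ := fun M => ∑ n ∈ (range M).filter (· ∈ E), y n with hgy_def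
  have hsum_eq : (fun M => ∑ n ∈ range M, Set.indicator E (fun n => (x n, y n)) n)
      = fun M => ((gx M, gy M) : ℝ × ℝ) := by
    funext M
    rw [Finset.sum_indicator_eq_sum_filter]
    exact Prod.ext (by rw [Prod.fst_sum]) (by rw [Prod.snd_sum])
  rw [hsum_eq]
  have hbound : ∀ M m, Nf m ≤ M → M ≤ Nf (m + 1) →
      |gx M - a| ≤ 2 * δ m ∧ |gy M - b| ≤ 2 * δ m := by
    intro M m h1 h2
    rw [hgx_def, hgy_def]
    dsimp only
    rw [hEdec M m h1 h2]
    exact (hRel m).2.2.2 M h1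
  have hδto0 : Tendsto (fun m => 2 * δ m) atTop (𝓝 0) := by
    have h1 : Tendsto (fun m : ℕ => (3 / 4 : ℝ) ^ m) atTop (𝓝 0) :=
      tendsto_pow_atTop_nhds_zero_of_lt_one (by norm_num) (by norm_num)
    have := (h1.const_mul (2 * D))
    rw [mul_zero] at this
    refine this.congr fun m => ?_
    rw [hδ_def]; ring
  have hloc : ∀ (g : ℕ → ℝ) (t : ℝ),
      (∀ M m, Nf m ≤ M → M ≤ Nf (m + 1) → |g M - t| ≤ 2 * δ m) →
      Tendsto g atTop (𝓝 t) := by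
    intro g t hg
    rw [Metric.tendsto_atTop]
    intro ε hε
    obtain ⟨m₀, hm₀⟩ := (hδto0.eventually (gt_mem_nhds hε)).exists
    refine ⟨Nf m₀, fun M hM => ?_⟩
    set P : ℕ → Prop := fun j => Nf j ≤ M with hP_def
    have hm₀M : m₀ ≤ M := le_trans (hNgrow m₀) hM
    set m := Nat.findGreatest P M with hm_def
    have hPm : P m := Nat.findGreatest_spec hm₀M hM
    have hm₀m : m₀ ≤ m := Nat.le_findGreatest hm₀M hM
    have hM2 : M ≤ Nf (m + 1) := by
      by_contra h
      push_neg at h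
      have hP1 : P (m + 1) := h.le
      have h3 : m + 1 ≤ Nat.findGreatest P M :=
        Nat.le_findGreatest (le_trans (hNgrow (m + 1)) h.le) hP1
      omega
    have h4 := hg M m hPm hM2
    rw [Real.dist_eq]
    have h5 : δ m ≤ δ m₀ := hδanti m₀ m hm₀m
    calc |g M - t| ≤ 2 * δ m := h4
      _ ≤ 2 * δ m₀ := by linarith
      _ < ε := hm₀
  exact (hloc gx a fun M m h1 h2 => (hbound M m h1 h2).1).prodMk_nhds
    (hloc gy b fun M m h1 h2 => (hbound M m h1 h2).2)

theorem stmt_12 (x y : ℕ → ℝ) (hred : ReductionProperty x y)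
    (hcc : CondConv (fun n => (x n, y n))) :
    ∀ p : ℝ × ℝ, Achieves (fun n => (x n, y n)) p := by
  classical
  obtain ⟨s0, hs0⟩ := hcc.1
  have hs0' : Filter.Tendsto (fun N => ∑ n ∈ Finset.range N, (x n, y n))
      Filter.atTop (𝓝 s0) := hs0
  have hysum : Filter.Tendsto (fun N => ∑ n ∈ Finset.range N, y n)
      Filter.atTop (𝓝 s0.2) := by
    have := (continuous_snd.tendsto s0).comp hs0'
    exact this.congr (fun N => by simp [Function.comp, Prod.snd_sum])
  have hy0 : Filter.Tendsto y Filter.atTop (𝓝 0) := by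
    have h2 : Filter.Tendsto (fun N => ∑ n ∈ Finset.range (N + 1), y n)
        Filter.atTop (𝓝 s0.2) := hysum.comp (Filter.tendsto_add_atTop_nat 1)
    have := h2.sub hysum
    simpa [Finset.sum_range_succ] using this
  have habse : ¬ Summable (fun n => enorm2 (x n, y n)) := hcc.2
  have habsy : ¬ Summable (fun n => |y n|) := aux_absy x y hred.1 habse
  have hpos : ∀ s : ℝ, s = 1 ∨ s = -1 → ¬ Summable (fun n => max (s * y n) 0) :=
    fun s hs => aux_pos y s0.2 hysum habsy s hs
  have hdiv : ∀ s : ℝ, s = 1 ∨ s = -1 → ∀ N₁ : ℕ, ∀ θ η : ℝ, 0 < θ → 0 < η →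
      ¬ Summable (fun n => if N₁ ≤ n ∧ 0 < s * y n ∧ |x n| ≤ η * |y n| ∧ |y n| < θ
        then s * y n else 0) :=
    fun s hs N₁ θ η hθ hη => aux_div x y hred.1 hy0 hpos s hs N₁ θ η hθ hη
  exact main_aux x y
    (fun a b δ hδ N F h1 h2 h3 => step_lemma x y a b hred.2 hdiv δ hδ N F h1 h2 h3)
end

section
/- Let (x_n), (y_n) be nonincreasing sequences of positive reals tending to 0 with ∑ x_n = ∑ y_n = ∞ and lim y_n/x_n = ∞. Define v_{4n-3} = (-x_{2n-1}, -y_{2n-1}), v_{4n-2} = (-x_{2n-1}, y_{2n-1}), v_{4n-1} = (x_{2n}, y_{2n}), v_{4n} = (x_{2n}, -y_{2n}). Then the achievement set A(v_n) equals ℝ². -/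
/-!
Pick from the `n`-th block `{4n+1, …, 4n+4}` the vector that points towards the current residual
`p - (chosen partial sum)`. Each coordinate of the residual then obeys the greedy recurrence
`a (n+1) = a n - t n` if `a n > 0` and `a (n+1) = a n + u n` otherwise, with nonnegative steps
tending to `0` whose sums diverge. Once the steps are below `ε`, such a sequence cannot stay
outside `(-ε, ε)` forever, since it would keep its sign and move in one direction by a divergent
amount; and once inside, it stays there. So the residual tends to `0`. The steps are `x (2n+2)`,
`x (2n+1)` in the first coordinate and one of `y (2n+1)`, `y (2n+2)` in the second, and
monotonicity lets them inherit the divergence of `∑ x` and `∑ y`.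
-/

open Filter Topology

open Finset

lemma exists_lt_of_le_sub_of_not_summable {f t : ℕ → ℝ} (ht : ∀ n, 0 ≤ t n)
    (hdiv : ¬ Summable t) {M : ℕ} (hf : ∀ n ≥ M, f (n + 1) ≤ f n - t n) (c : ℝ) :
    ∃ n ≥ M, f n < c := by
  have hle : ∀ k, f (M + k) ≤ f M - ∑ i ∈ range k, t (M + i) := by
    intro k
    induction k with
    | zero => simp
    | succ k ih =>
      rw [sum_range_succ, ← add_assoc]
      linarith [hf (M + k) (Nat.le_add_right M k)]
  have htop : Tendsto (fun k => ∑ i ∈ range k, t (M + i)) atTop atTop := by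
    refine (not_summable_iff_tendsto_nat_atTop_of_nonneg fun i => ht _).1 fun h => hdiv ?_
    exact (summable_nat_add_iff M).1 (by simpa only [add_comm] using h)
  obtain ⟨k, hk⟩ := (htop.eventually_gt_atTop (f M - c)).exists
  exact ⟨M + k, Nat.le_add_right M k, by linarith [hle k]⟩

section Steering

variable {a t u : ℕ → ℝ}

lemma abs_succ_lt_of_steering (hrec : ∀ n, a (n + 1) = if 0 < a n then a n - t n else a n + u n)
    {n : ℕ} {ε : ℝ} (ht : 0 ≤ t n) (hu : 0 ≤ u n) (htε : t n < ε) (huε : u n < ε)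
    (ha : |a n| < ε) : |a (n + 1)| < ε := by
  rw [hrec]
  rw [abs_lt] at ha ⊢
  split_ifs <;> constructor <;> linarith

lemma exists_abs_lt_of_steering (hrec : ∀ n, a (n + 1) = if 0 < a n then a n - t n else a n + u n)
    (ht : ∀ n, 0 ≤ t n) (hu : ∀ n, 0 ≤ u n) (htdiv : ¬ Summable t) (hudiv : ¬ Summable u)
    {M : ℕ} {ε : ℝ} (hsmall : ∀ n ≥ M, t n < ε ∧ u n < ε) :
    ∃ n ≥ M, |a n| < ε := by
  by_contra! hfar
  by_cases hM : 0 < a M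
  · -- while `ε ≤ a n`, a step of size `< ε` cannot make `a` nonpositive
    have hpos : ∀ n ≥ M, 0 < a n := by
      intro n hn
      induction n, hn using Nat.le_induction with
      | base => exact hM
      | succ n hn ih =>
        have := hfar n hn
        rw [abs_of_pos ih] at this
        rw [hrec, if_pos ih]
        linarith [(hsmall n hn).1]
    obtain ⟨n, hn, hneg⟩ := exists_lt_of_le_sub_of_not_summable ht htdiv
      (fun n hn => (hrec n).trans_le (by rw [if_pos (hpos n hn)])) 0
    exact (hpos n hn).not_gt hneg
  · have hnonpos : ∀ n ≥ M, a n ≤ 0 := by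
      intro n hn
      induction n, hn using Nat.le_induction with
      | base => exact not_lt.1 hM
      | succ n hn ih =>
        have := hfar n hn
        rw [abs_of_nonpos ih] at this
        rw [hrec, if_neg ih.not_gt]
        linarith [(hsmall n hn).2]
    obtain ⟨n, hn, hneg⟩ := exists_lt_of_le_sub_of_not_summable (f := fun n => -a n) hu hudiv
      (fun n hn => by rw [hrec, if_neg (hnonpos n hn).not_gt]; linarith) 0
    linarith [hnonpos n hn]

theorem tendsto_zero_of_steering
    (hrec : ∀ n, a (n + 1) = if 0 < a n then a n - t n else a n + u n)
    (ht : ∀ n, 0 ≤ t n) (hu : ∀ n, 0 ≤ u n)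
    (htlim : Tendsto t atTop (𝓝 0)) (hulim : Tendsto u atTop (𝓝 0))
    (htdiv : ¬ Summable t) (hudiv : ¬ Summable u) : Tendsto a atTop (𝓝 0) := by
  refine Metric.tendsto_atTop.2 fun ε hε => ?_
  obtain ⟨M, hsmall⟩ := eventually_atTop.1
    ((htlim.eventually (gt_mem_nhds hε)).and (hulim.eventually (gt_mem_nhds hε)))
  obtain ⟨n₀, hn₀M, hn₀⟩ := exists_abs_lt_of_steering hrec ht hu htdiv hudiv hsmall
  refine ⟨n₀, fun n hn => ?_⟩
  rw [Real.dist_0_eq_abs]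
  induction n, hn using Nat.le_induction with
  | base => exact hn₀
  | succ n hn ih =>
    have hMn := hsmall n (hn₀M.trans hn)
    exact abs_succ_lt_of_steering hrec (ht n) (hu n) hMn.1 hMn.2 ih

end Steering

lemma Antitone.not_summable_comp_two_mul_add_one {g : ℕ → ℝ} (hg : Antitone g)
    (hg0 : ∀ n, 0 ≤ g n) (hdiv : ¬ Summable g) : ¬ Summable fun n => g (2 * n + 1) := by
  intro hodd
  have heven : Summable fun n => g (2 * n) :=
    (summable_nat_add_iff 1).1 <|
      hodd.of_nonneg_of_le (fun n => hg0 _) fun n => hg (by omega)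
  exact hdiv (heven.even_add_odd hodd)

lemma Antitone.nonneg_tendsto_zero_not_summable_of_mem_Icc {g t : ℕ → ℝ} (hg : Antitone g)
    (hlim : Tendsto g atTop (𝓝 0)) (hdiv : ¬ Summable g)
    (ht : ∀ n, t n ∈ Set.Icc (g (2 * n + 1)) (g (2 * n))) :
    (∀ n, 0 ≤ t n) ∧ Tendsto t atTop (𝓝 0) ∧ ¬ Summable t := by
  have hg0 : ∀ n, 0 ≤ g n := hg.le_of_tendsto hlim
  have ht0 : ∀ n, 0 ≤ t n := fun n => (hg0 _).trans (ht n).1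
  refine ⟨ht0, squeeze_zero ht0 (fun n => (ht n).2) ?_, fun hsum => ?_⟩
  · have htwo : Tendsto (fun n : ℕ => 2 * n) atTop atTop :=
      tendsto_atTop_mono (fun n => by simp only [id]; omega) tendsto_id
    exact hlim.comp htwo
  · exact hg.not_summable_comp_two_mul_add_one hg0 hdiv
      (hsum.of_nonneg_of_le (fun n => hg0 _) fun n => (ht n).1)

theorem sum_range_indicator_range_eq {M : Type*} [AddCommMonoid M] {c : ℕ → ℕ}
    (hc : StrictMono c) [DecidablePred (· ∈ Set.range c)] (f : ℕ → M) (N : ℕ) :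
    ∑ n ∈ range N, (Set.range c).indicator f n =
      ∑ j ∈ range (Nat.count (· ∈ Set.range c) N), f (c j) := by
  have hnth : ∀ j, Nat.nth (· ∈ Set.range c) j = c j := fun j => by
    have := Nat.nth_comp_of_strictMono hc (p := (· ∈ Set.range c)) (n := j) (fun k hk => hk)
      fun hfin => absurd hfin (Set.infinite_range_of_injective hc.injective)
    simpa using this.symm
  induction N with
  | zero => simp
  | succ N ih =>
    rw [sum_range_succ, ih, Nat.count_succ]
    by_cases hN : N ∈ Set.range c
    · rw [if_pos hN, sum_range_succ, Set.indicator_of_mem hN, ← hnth, Nat.nth_count hN]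
    · simp [hN]

theorem achieves_of_tendsto_sum_comp {v : ℕ → ℝ × ℝ} {c : ℕ → ℕ} (hc : StrictMono c)
    {p : ℝ × ℝ} (h : Tendsto (fun n => ∑ j ∈ range n, v (c j)) atTop (𝓝 p)) :
    Achieves v p := by
  classical
  have hinf : (Set.range c).Infinite := Set.infinite_range_of_injective hc.injective
  have hcount : Tendsto (Nat.count (· ∈ Set.range c)) atTop atTop :=
    tendsto_atTop_atTop.2 fun J => ⟨Nat.nth (· ∈ Set.range c) J, fun N hN =>
      (Nat.count_nth_of_infinite hinf J).symm.le.trans (Nat.count_monotone _ hN)⟩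
  refine ⟨Set.range c, ?_⟩
  unfold ConvergesTo
  simp_rw [sum_range_indicator_range_eq hc]
  exact h.comp hcount

/-- The index in the block `{4n+1, …, 4n+4}` whose vector points towards `d` in both
coordinates, a zero coordinate of `d` counting as negative. -/
noncomputable def greedyIdx (d : ℝ × ℝ) (n : ℕ) : ℕ :=
  4 * n + if 0 < d.1 then (if 0 < d.2 then 3 else 4) else (if 0 < d.2 then 2 else 1)

noncomputable def greedyResidual (v : ℕ → ℝ × ℝ) (p : ℝ × ℝ) : ℕ → ℝ × ℝ
  | 0 => p
  | n + 1 => greedyResidual v p n - v (greedyIdx (greedyResidual v p n) n)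

lemma strictMono_greedyIdx (r : ℕ → ℝ × ℝ) : StrictMono fun n => greedyIdx (r n) n :=
  strictMono_nat_of_lt_succ fun n => by
    simp only [greedyIdx]
    split_ifs <;> omega

lemma sum_greedyIdx (v : ℕ → ℝ × ℝ) (p : ℝ × ℝ) (n : ℕ) :
    ∑ j ∈ range n, v (greedyIdx (greedyResidual v p j) j) = p - greedyResidual v p n := by
  induction n with
  | zero => simp [greedyResidual]
  | succ n ih =>
    rw [sum_range_succ, ih, greedyResidual]
    abel

lemma achieves_of_tendsto_greedyResidual {v : ℕ → ℝ × ℝ} {p : ℝ × ℝ}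
    (h : Tendsto (greedyResidual v p) atTop (𝓝 0)) : Achieves v p := by
  refine achieves_of_tendsto_sum_comp (strictMono_greedyIdx (greedyResidual v p)) ?_
  simp_rw [sum_greedyIdx]
  simpa using tendsto_const_nhds.sub h

lemma apply_greedyIdx {x y : ℕ → ℝ} {v : ℕ → ℝ × ℝ}
    (hv1 : ∀ n : ℕ, 1 ≤ n → v (4 * n - 3) = (-x (2 * n - 1), -y (2 * n - 1)))
    (hv2 : ∀ n : ℕ, 1 ≤ n → v (4 * n - 2) = (-x (2 * n - 1), y (2 * n - 1)))
    (hv3 : ∀ n : ℕ, 1 ≤ n → v (4 * n - 1) = (x (2 * n), y (2 * n)))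
    (hv4 : ∀ n : ℕ, 1 ≤ n → v (4 * n) = (x (2 * n), -y (2 * n)))
    (d : ℝ × ℝ) (n : ℕ) :
    v (greedyIdx d n) =
      (if 0 < d.1 then x (2 * n + 2) else -x (2 * n + 1),
        (if 0 < d.2 then 1 else -1) * if 0 < d.1 then y (2 * n + 2) else y (2 * n + 1)) := by
  have hodd : 2 * (n + 1) - 1 = 2 * n + 1 := by omega
  unfold greedyIdx
  split_ifs
  · simpa [show 4 * (n + 1) - 1 = 4 * n + 3 by omega, mul_add] using hv3 (n + 1) le_add_self
  · simpa [show 4 * (n + 1) = 4 * n + 4 by omega, mul_add] using hv4 (n + 1) le_add_self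
  · simpa [show 4 * (n + 1) - 2 = 4 * n + 2 by omega, hodd] using hv2 (n + 1) le_add_self
  · simpa [show 4 * (n + 1) - 3 = 4 * n + 1 by omega, hodd] using hv1 (n + 1) le_add_self

theorem stmt_13_general (x y : ℕ → ℝ)
    (hxmono : ∀ n : ℕ, 1 ≤ n → x (n + 1) ≤ x n)
    (hymono : ∀ n : ℕ, 1 ≤ n → y (n + 1) ≤ y n)
    (hxlim : Tendsto x atTop (𝓝 0)) (hylim : Tendsto y atTop (𝓝 0))
    (hxdiv : ¬ Summable x) (hydiv : ¬ Summable y)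
    (v : ℕ → ℝ × ℝ)
    (hv1 : ∀ n : ℕ, 1 ≤ n → v (4 * n - 3) = (-x (2 * n - 1), -y (2 * n - 1)))
    (hv2 : ∀ n : ℕ, 1 ≤ n → v (4 * n - 2) = (-x (2 * n - 1), y (2 * n - 1)))
    (hv3 : ∀ n : ℕ, 1 ≤ n → v (4 * n - 1) = (x (2 * n), y (2 * n)))
    (hv4 : ∀ n : ℕ, 1 ≤ n → v (4 * n) = (x (2 * n), -y (2 * n))) :
    ∀ p : ℝ × ℝ, Achieves v p := by
  intro p
  set r := greedyResidual v p
  have hv := apply_greedyIdx hv1 hv2 hv3 hv4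
  have hx : Antitone fun n => x (n + 1) := antitone_nat_of_succ_le fun n => hxmono _ le_add_self
  have hy : Antitone fun n => y (n + 1) := antitone_nat_of_succ_le fun n => hymono _ le_add_self
  have hxsteps := fun t => hx.nonneg_tendsto_zero_not_summable_of_mem_Icc (t := t)
    ((tendsto_add_atTop_iff_nat 1).2 hxlim) (mt (summable_nat_add_iff 1).1 hxdiv)
  have hysteps := fun t => hy.nonneg_tendsto_zero_not_summable_of_mem_Icc (t := t)
    ((tendsto_add_atTop_iff_nat 1).2 hylim) (mt (summable_nat_add_iff 1).1 hydiv)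
  obtain ⟨ht, htlim, htdiv⟩ :=
    hxsteps (fun n => x (2 * n + 2)) fun n => ⟨le_rfl, hx (by omega)⟩
  obtain ⟨hu, hulim, hudiv⟩ :=
    hxsteps (fun n => x (2 * n + 1)) fun n => ⟨hx (by omega), le_rfl⟩
  obtain ⟨hw, hwlim, hwdiv⟩ :=
    hysteps (fun n => if 0 < (r n).1 then y (2 * n + 2) else y (2 * n + 1)) fun n => by
      split_ifs
      exacts [⟨le_rfl, hy (by omega)⟩, ⟨hy (by omega), le_rfl⟩]
  have hfst : Tendsto (fun n => (r n).1) atTop (𝓝 0) :=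
    tendsto_zero_of_steering
      (fun n => by simp only [r, greedyResidual, Prod.fst_sub, hv]; split_ifs <;> ring)
      ht hu htlim hulim htdiv hudiv
  have hsnd : Tendsto (fun n => (r n).2) atTop (𝓝 0) :=
    tendsto_zero_of_steering
      (fun n => by simp only [r, greedyResidual, Prod.snd_sub, hv]; split_ifs <;> ring)
      hw hw hwlim hwlim hwdiv hwdiv
  exact achieves_of_tendsto_greedyResidual ((Prod.tendsto_iff _ _).2 ⟨hfst, hsnd⟩)

theorem stmt_13 (x y : ℕ → ℝ)
    (hxpos : ∀ n : ℕ, 1 ≤ n → 0 < x n) (hypos : ∀ n : ℕ, 1 ≤ n → 0 < y n)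
    (hxmono : ∀ n : ℕ, 1 ≤ n → x (n + 1) ≤ x n)
    (hymono : ∀ n : ℕ, 1 ≤ n → y (n + 1) ≤ y n)
    (hxlim : Tendsto x atTop (𝓝 0)) (hylim : Tendsto y atTop (𝓝 0))
    (hxdiv : ¬ Summable x) (hydiv : ¬ Summable y)
    (hratio : Tendsto (fun n => |y n| / |x n|) atTop atTop)
    (v : ℕ → ℝ × ℝ)
    (hv1 : ∀ n : ℕ, 1 ≤ n → v (4 * n - 3) = (-x (2 * n - 1), -y (2 * n - 1)))
    (hv2 : ∀ n : ℕ, 1 ≤ n → v (4 * n - 2) = (-x (2 * n - 1), y (2 * n - 1)))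
    (hv3 : ∀ n : ℕ, 1 ≤ n → v (4 * n - 1) = (x (2 * n), y (2 * n)))
    (hv4 : ∀ n : ℕ, 1 ≤ n → v (4 * n) = (x (2 * n), -y (2 * n))) :
    ∀ p : ℝ × ℝ, Achieves v p :=
  stmt_13_general x y hxmono hymono hxlim hylim hxdiv hydiv v hv1 hv2 hv3 hv4
end

section
/- For v_n = (1/2^n, (-1)^n/n), the point (1, -ln 2) belongs to A(v_n) but not to A_abs(v_n). -/
/-!
The first coordinates `2⁻ⁿ` are positive and sum to `1`, so a subseries whose first coordinates
sum to `1` must be the whole series. The whole series does converge to `(1, -log 2)`, since the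
alternating harmonic series sums to `log 2`; but it is not absolutely convergent, because its
second coordinates form the harmonic series in absolute value.
-/

open Filter Topology

open Finset

lemma sum_range_two_mul_neg_one_pow_div_eq_harmonic_sub (N : ℕ) :
    ∑ i ∈ range (2 * N), (-1 : ℝ) ^ i * (1 / (i + 1)) =
      (harmonic (2 * N) : ℝ) - harmonic N := by
  induction N with
  | zero => simp
  | succ n ih =>
    rw [show 2 * (n + 1) = 2 * n + 1 + 1 by ring, sum_range_succ, sum_range_succ, ih,
      harmonic_succ, harmonic_succ, harmonic_succ, pow_succ, pow_mul]
    push_cast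
    field_simp
    ring

lemma tendsto_sum_range_neg_one_pow_div_log_two :
    Tendsto (fun n ↦ ∑ i ∈ range n, (-1 : ℝ) ^ i * (1 / (i + 1))) atTop (𝓝 (Real.log 2)) := by
  obtain ⟨l, hl⟩ := Antitone.tendsto_alternating_series_of_tendsto_zero
    (f := fun i : ℕ ↦ 1 / ((i : ℝ) + 1))
    (fun _ _ hij ↦ by simp only; gcongr) tendsto_one_div_add_atTop_nhds_zero_nat
  have h_two_mul : Tendsto (fun N : ℕ ↦ 2 * N) atTop atTop :=
    tendsto_id.const_mul_atTop' two_pos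
  -- `H (2N) - H N = (H (2N) - log (2N)) - (H N - log N) + log 2 → γ - γ + log 2`.
  have h_harmonic : Tendsto (fun N : ℕ ↦ (harmonic (2 * N) : ℝ) - harmonic N) atTop
      (𝓝 (Real.log 2)) := by
    have h := ((Real.tendsto_harmonic_sub_log.comp h_two_mul).sub
      Real.tendsto_harmonic_sub_log).add_const (Real.log 2)
    rw [sub_self, zero_add] at h
    refine h.congr' ?_
    filter_upwards [eventually_ne_atTop 0] with N hN
    simp only [Function.comp, Nat.cast_mul, Nat.cast_ofNat]
    rw [Real.log_mul two_ne_zero (Nat.cast_ne_zero.2 hN)]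
    ring
  have hl2 : l = Real.log 2 := tendsto_nhds_unique
    ((hl.comp h_two_mul).congr sum_range_two_mul_neg_one_pow_div_eq_harmonic_sub) h_harmonic
  exact hl2 ▸ hl

lemma eq_univ_of_hasSum_indicator_of_pos {ι : Type*} {f : ι → ℝ} {a : ℝ} {E : Set ι}
    (hpos : ∀ i, 0 < f i) (hf : HasSum f a) (hE : HasSum (E.indicator f) a) : E = Set.univ := by
  refine Set.eq_univ_of_forall fun i ↦ by_contra fun hi ↦ (hasSum_lt (i := i) ?_ ?_ hE hf).false
  · exact E.indicator_le_self' fun j _ ↦ (hpos j).le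
  · simpa [Set.indicator_of_notMem hi] using hpos i

lemma achieves_of_convergesTo {x : ℕ → ℝ × ℝ} {s : ℝ × ℝ} (h : ConvergesTo x s) :
    Achieves x s :=
  ⟨Set.univ, by rwa [Set.indicator_univ]⟩

lemma convergesTo_of_tendsto_fst_snd {x : ℕ → ℝ × ℝ} {s : ℝ × ℝ}
    (h₁ : Tendsto (fun N ↦ ∑ n ∈ range N, (x n).1) atTop (𝓝 s.1))
    (h₂ : Tendsto (fun N ↦ ∑ n ∈ range N, (x n).2) atTop (𝓝 s.2)) : ConvergesTo x s := by
  refine (Prod.tendsto_iff _ s).2 ⟨?_, ?_⟩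
  · simpa only [Prod.fst_sum] using h₁
  · simpa only [Prod.snd_sum] using h₂

lemma AchievesAbs.summable_enorm2_of_hasSum_fst {x : ℕ → ℝ × ℝ} {s : ℝ × ℝ}
    (h : AchievesAbs x s) (hpos : ∀ n, 0 < (x n).1) (hfst : HasSum (fun n ↦ (x n).1) s.1) :
    Summable fun n ↦ enorm2 (x n) := by
  obtain ⟨E, hE_abs, hE⟩ := h
  have hE_fst : HasSum (E.indicator (Prod.fst ∘ x)) s.1 := by
    rw [Set.indicator_comp_of_zero Prod.fst_zero]
    exact (ContinuousLinearMap.fst ℝ ℝ ℝ).hasSum hE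
  rw [eq_univ_of_hasSum_indicator_of_pos hpos hfst hE_fst, Set.indicator_univ] at hE_abs
  exact hE_abs

theorem stmt_15 :
    Achieves (fun n : ℕ => ((1 : ℝ) / 2 ^ (n + 1), (-1 : ℝ) ^ (n + 1) / (n + 1)))
      (1, -Real.log 2) ∧
    ¬ AchievesAbs (fun n : ℕ => ((1 : ℝ) / 2 ^ (n + 1), (-1 : ℝ) ^ (n + 1) / (n + 1)))
      (1, -Real.log 2) := by
  have hfst : HasSum (fun n : ℕ ↦ (1 : ℝ) / 2 ^ (n + 1)) 1 := by
    convert hasSum_geometric_two' 1 using 2 with n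
    rw [pow_succ, div_div, mul_comm]
  have hsnd : Tendsto (fun N ↦ ∑ n ∈ range N, (-1 : ℝ) ^ (n + 1) / (n + 1)) atTop
      (𝓝 (-Real.log 2)) := by
    refine tendsto_sum_range_neg_one_pow_div_log_two.neg.congr fun N ↦ ?_
    simp only [← sum_neg_distrib, pow_succ]
    exact sum_congr rfl fun i _ ↦ by ring
  refine ⟨achieves_of_convergesTo (convergesTo_of_tendsto_fst_snd hfst.tendsto_sum_nat hsnd),
    fun h ↦ Real.not_summable_one_div_natCast ?_⟩
  have habs := h.summable_enorm2_of_hasSum_fst (fun n ↦ by positivity) hfst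
  refine (summable_nat_add_iff 1).1 <| habs.of_nonneg_of_le (fun _ ↦ by positivity) fun n ↦ ?_
  refine (le_of_eq ?_).trans (abs_snd_le_enorm2 _)
  rw [abs_div, abs_pow, abs_neg, abs_one, one_pow, abs_of_pos (by positivity)]
  push_cast
  rfl
end
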